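/- arXiv:1206.4752 — 9 statements merged into one kernel-verified Lean document; each statement's English description precedes it below -/
import Mathlib

section
/- Let G be a locally compact abelian Hausdorff topological group (written additively) and let w : G → ℝ be a weight, i.e. w is continuous, w(t) ≥ 1, w(s+t) ≤ w(s)·w(t) and w(−t) = w(t) for all s,t ∈ G, and Σ_{n=1}^∞ n⁻² · log w(n·t) < ∞ for every t ∈ G. Then for every compact set K ⊆ G one has (1/n)·log w(s + n·t) → 0 as n → ∞ uniformly with respect to s, t ∈ K; that is, for every ε > 0 there exists N such that (1/n)·log w(s + n·t) < ε for all n ≥ N and all s, t ∈ K. -/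
/-!
The sequence `n ↦ log w(n • t)` is subadditive, so once `log w(k • t) < δ k` for a single
`k ≥ 1`, Euclidean division `n = q k + r` gives `log w(n • t) ≤ δ n + log w(r • t)` for every `n`.
The Beurling–Domar condition provides such a `k` for each `t`, because `∑ δ / n` diverges.
By continuity the same `k` works on a neighbourhood of `t`, so compactness of `K` leaves
finitely many `k`, and the remainders `log w(r • t)` are then bounded uniformly on `K`.
The shift by `s` costs at most `log w(s)`, which is bounded on `K` as well.
-/

open Set

namespace Subadditive

variable {u : ℕ → ℝ}

theorem apply_le_mul_add_apply_mod (h : Subadditive u) {δ : ℝ} (hδ : 0 ≤ δ) {k : ℕ}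
    (hk : u k ≤ δ * k) (n : ℕ) : u n ≤ δ * n + u (n % k) := by
  have hquot : ((n / k : ℕ) : ℝ) * u k ≤ δ * n :=
    calc ((n / k : ℕ) : ℝ) * u k ≤ (n / k : ℕ) * (δ * k) := by gcongr
      _ = δ * ((n / k * k : ℕ) : ℝ) := by push_cast; ring
      _ ≤ δ * n := by gcongr; exact Nat.div_mul_le_self n k
  calc u n = u (n / k * k + n % k) := by rw [Nat.div_add_mod']
    _ ≤ (n / k : ℕ) * u k + u (n % k) := h.apply_mul_add_le _ _ _
    _ ≤ δ * n + u (n % k) := by gcongr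

end Subadditive

theorem exists_ne_zero_lt_mul_of_summable_div_sq {u : ℕ → ℝ}
    (hu : Summable fun n : ℕ => u n / (n : ℝ) ^ 2) {δ : ℝ} (hδ : 0 < δ) :
    ∃ n ≠ 0, u n < δ * n := by
  by_contra! hlarge
  have hharmonic : Summable fun n : ℕ => δ * (n : ℝ)⁻¹ := by
    refine hu.of_nonneg_of_le (fun n => by positivity) fun n => ?_
    rcases eq_or_ne n 0 with rfl | hn
    · simp
    · have hn' : (0 : ℝ) < n := by positivity
      calc δ * (n : ℝ)⁻¹ = δ * n / (n : ℝ) ^ 2 := by field_simp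
        _ ≤ u n / (n : ℝ) ^ 2 := by gcongr; exact hlarge n hn
  exact Real.not_summable_natCast_inv ((summable_mul_left_iff hδ.ne').mp hharmonic)

section UniformOnCompact

variable {X : Type*} [TopologicalSpace X] {f : ℕ → X → ℝ} {K : Set X}

theorem IsCompact.exists_forall_exists_lt_mul (hK : IsCompact K)
    (hf : ∀ n, Continuous (f n)) {δ : ℝ} (hsmall : ∀ x ∈ K, ∃ n ≠ 0, f n x < δ * n) :
    ∃ m, ∀ x ∈ K, ∃ k ∈ Finset.Icc 1 m, f k x < δ * k := by
  let V : ℕ → Set X := fun m => ⋃ k ∈ Finset.Icc 1 m, {x | f k x < δ * k}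
  have hV_open : ∀ m, IsOpen (V m) := fun m =>
    isOpen_biUnion fun k _ => isOpen_lt (hf k) continuous_const
  have hV_mono : Monotone V := fun m m' hm =>
    biUnion_subset_biUnion_left (Finset.coe_subset.2 (Finset.Icc_subset_Icc_right hm))
  have hK_cover : K ⊆ ⋃ m, V m := fun x hx => by
    obtain ⟨n, hn, hnx⟩ := hsmall x hx
    exact mem_iUnion.2 ⟨n, mem_biUnion (Finset.mem_Icc.2 ⟨Nat.one_le_iff_ne_zero.2 hn, le_rfl⟩) hnx⟩
  obtain ⟨m, hm⟩ := hK.elim_directed_cover V hV_open hK_cover hV_mono.directed_le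
  exact ⟨m, fun x hx => by simpa [V] using hm hx⟩

theorem IsCompact.exists_upper_bound_of_continuous (hK : IsCompact K)
    (hf : ∀ n, Continuous (f n)) (m : ℕ) : ∃ B, ∀ r < m, ∀ x ∈ K, f r x ≤ B := by
  obtain ⟨B, hB⟩ := (finite_Iio m).bddAbove_biUnion.2 fun r _ =>
    hK.bddAbove_image (hf r).continuousOn
  exact ⟨B, fun r hr x hx => hB (mem_biUnion (mem_Iio.2 hr) (mem_image_of_mem _ hx))⟩

theorem IsCompact.exists_le_mul_add_of_subadditive (hK : IsCompact K)
    (hf : ∀ n, Continuous (f n)) (hsub : ∀ x ∈ K, Subadditive (f · x)) {δ : ℝ} (hδ : 0 ≤ δ)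
    (hsmall : ∀ x ∈ K, ∃ n ≠ 0, f n x < δ * n) :
    ∃ B, ∀ n, ∀ x ∈ K, f n x ≤ δ * n + B := by
  obtain ⟨m, hm⟩ := hK.exists_forall_exists_lt_mul hf hsmall
  obtain ⟨B, hB⟩ := hK.exists_upper_bound_of_continuous hf m
  refine ⟨B, fun n x hx => ?_⟩
  obtain ⟨k, hk, hkx⟩ := hm x hx
  obtain ⟨hk1, hkm⟩ := Finset.mem_Icc.1 hk
  calc f n x ≤ δ * n + f (n % k) x := (hsub x hx).apply_le_mul_add_apply_mod hδ hkx.le n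
    _ ≤ δ * n + B := by gcongr; exact hB _ ((Nat.mod_lt n hk1).trans_le hkm) x hx

end UniformOnCompact

theorem log_apply_add_le {G : Type*} [Add G] {w : G → ℝ} (hw_pos : ∀ t, 0 < w t)
    (hw_submul : ∀ s t, w (s + t) ≤ w s * w t) (s t : G) :
    Real.log (w (s + t)) ≤ Real.log (w s) + Real.log (w t) := by
  rw [← Real.log_mul (hw_pos s).ne' (hw_pos t).ne']
  exact Real.log_le_log (hw_pos _) (hw_submul s t)

theorem weight_log_uniform_limit_general
    {G : Type*} [AddCommGroup G] [TopologicalSpace G] [IsTopologicalAddGroup G]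
    (w : G → ℝ)
    (hw_cont : Continuous w)
    (hw_one : ∀ t : G, 1 ≤ w t)
    (hw_submul : ∀ s t : G, w (s + t) ≤ w s * w t)
    (hw_BD : ∀ t : G, Summable fun n : ℕ => Real.log (w (n • t)) / (n : ℝ) ^ 2) :
    ∀ K : Set G, IsCompact K → ∀ ε > 0, ∃ N : ℕ, ∀ n : ℕ, N ≤ n →
      ∀ s ∈ K, ∀ t ∈ K, (1 / (n : ℝ)) * Real.log (w (s + n • t)) < ε := by
  intro K hK ε hε
  have hw_pos : ∀ t, 0 < w t := fun t => one_pos.trans_le (hw_one t)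
  have hlog_add := log_apply_add_le hw_pos hw_submul
  obtain ⟨B, hB⟩ := hK.exists_le_mul_add_of_subadditive (f := fun n t => Real.log (w (n • t)))
    (fun n => (hw_cont.comp (continuous_nsmul n)).log fun t => (hw_pos _).ne')
    (fun t _ m n => by simpa only [add_nsmul] using hlog_add (m • t) (n • t)) (half_pos hε).le
    (fun t _ => exists_ne_zero_lt_mul_of_summable_div_sq (hw_BD t) (half_pos hε))
  obtain ⟨A, hA⟩ := hK.bddAbove_image (hw_cont.log fun t => (hw_pos t).ne').continuousOn
  obtain ⟨N, hN⟩ := exists_nat_gt ((A + B) / (ε / 2))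
  refine ⟨N, fun n hn s hs t ht => ?_⟩
  rcases Nat.eq_zero_or_pos n with rfl | hn0
  · simpa using hε
  have hn_pos : (0 : ℝ) < n := Nat.cast_pos.2 hn0
  have hAB : A + B < ε / 2 * n :=
    (div_lt_iff₀' (half_pos hε)).1 (hN.trans_le (Nat.cast_le.2 hn))
  have hlog : Real.log (w (s + n • t)) ≤ A + (ε / 2 * n + B) :=
    (hlog_add s (n • t)).trans (add_le_add (hA (mem_image_of_mem _ hs)) (hB n t ht))
  rw [one_div_mul_eq_div, div_lt_iff₀ hn_pos]
  linarith

/-- For a weight `w` on a locally compact abelian Hausdorff group `G`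
(continuous, `w ≥ 1`, submultiplicative, symmetric, Beurling–Domar condition),
`(1/n) log w(s + n • t) → 0` uniformly for `s, t` in any compact `K ⊆ G`. -/
theorem weight_log_uniform_limit
    {G : Type*} [AddCommGroup G] [TopologicalSpace G] [IsTopologicalAddGroup G]
    [LocallyCompactSpace G] [T2Space G]
    (w : G → ℝ)
    (hw_cont : Continuous w)
    (hw_one : ∀ t : G, 1 ≤ w t)
    (hw_submul : ∀ s t : G, w (s + t) ≤ w s * w t)
    (hw_symm : ∀ t : G, w (-t) = w t)
    (hw_BD : ∀ t : G, Summable fun n : ℕ => Real.log (w (n • t)) / (n : ℝ) ^ 2) :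
    ∀ K : Set G, IsCompact K → ∀ ε > 0, ∃ N : ℕ, ∀ n : ℕ, N ≤ n →
      ∀ s ∈ K, ∀ t ∈ K, (1 / (n : ℝ)) * Real.log (w (s + n • t)) < ε :=
  weight_log_uniform_limit_general w hw_cont hw_one hw_submul hw_BD
end

section
/- Let G be a locally compact abelian Hausdorff topological group and let w : G → ℝ be continuous with w(t) > 0 for all t. Then 1/w vanishes at infinity on G (i.e. for every ε > 0 the set {t ∈ G : 1/w(t) ≥ ε} is compact) if and only if both of the following hold: (i) for each compact neighbourhood H of 0 there is a compact set K ⊇ H such that sup_{t∈K} w(t) ≤ inf_{t∉K} w(t); and (ii) G is compact or w is unbounded. -/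
/-!
Since `w > 0`, the set `{1 / w ≥ ε}` is the sublevel set `{w ≤ 1 / ε}`, so `1 / w` vanishes at
infinity exactly when every sublevel set of `w` is compact. If so, a compact `H` lies in the
compact sublevel set `K = {w ≤ sup_H w}`, outside of which `w` exceeds its values on `K`, and `w`
is unbounded unless the whole space is a sublevel set. Conversely, given `c < w t₁`, enlarge a
compact neighbourhood of `0` by `t₁` and take `K` as in (i): every point outside `K` has
`w ≥ w t₁ > c`, so the closed set `{w ≤ c}` lies in `K`.
-/

open Filter Topology

section Sublevels

variable {X : Type*} [TopologicalSpace X] {w : X → ℝ}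

theorem exists_isCompact_superset_of_isCompact_sublevels
    (hw : ∀ c, IsCompact {x | w x ≤ c}) {H : Set X} (hH : IsCompact H) (hwH : ContinuousOn w H) :
    ∃ K : Set X, IsCompact K ∧ H ⊆ K ∧ ∀ s ∈ K, ∀ t ∉ K, w s ≤ w t := by
  refine ⟨{x | w x ≤ sSup (w '' H)}, hw _, fun x hx => ?_, fun s hs t ht => ?_⟩
  · exact le_csSup (hH.bddAbove_image hwH) (Set.mem_image_of_mem w hx)
  · exact hs.trans (not_le.mp ht).le

theorem compactSpace_or_forall_exists_lt_of_isCompact_sublevels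
    (hw : ∀ c, IsCompact {x | w x ≤ c}) : CompactSpace X ∨ ∀ M : ℝ, ∃ t, M < w t := by
  by_contra! h
  obtain ⟨hX, M, hM⟩ := h
  have huniv : {x | w x ≤ M} = Set.univ := Set.eq_univ_of_forall hM
  exact hX (isCompact_univ_iff.mp (huniv ▸ hw M))

theorem isCompact_setOf_le_of_lt {x₀ : X} (hw : Continuous w)
    (hsep : ∀ H : Set X, IsCompact H → H ∈ 𝓝 x₀ →
      ∃ K : Set X, IsCompact K ∧ H ⊆ K ∧ ∀ s ∈ K, ∀ t ∉ K, w s ≤ w t)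
    {H₀ : Set X} (hH₀ : IsCompact H₀) (hH₀x₀ : H₀ ∈ 𝓝 x₀) {c : ℝ} {t₁ : X} (hc : c < w t₁) :
    IsCompact {x | w x ≤ c} := by
  obtain ⟨K, hK, hHK, hKw⟩ := hsep (insert t₁ H₀) (hH₀.insert t₁)
    (mem_of_superset hH₀x₀ (Set.subset_insert t₁ H₀))
  refine hK.of_isClosed_subset (isClosed_le hw continuous_const) fun t ht => ?_
  by_contra htK
  exact (hc.trans_le (hKw t₁ (hHK (Set.mem_insert t₁ H₀)) t htK)).not_ge ht

theorem forall_isCompact_sublevels_iff [WeaklyLocallyCompactSpace X] (x₀ : X) (hw : Continuous w) :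
    (∀ c, IsCompact {x | w x ≤ c}) ↔
      ((∀ H : Set X, IsCompact H → H ∈ 𝓝 x₀ →
          ∃ K : Set X, IsCompact K ∧ H ⊆ K ∧ ∀ s ∈ K, ∀ t ∉ K, w s ≤ w t) ∧
        (CompactSpace X ∨ ∀ M : ℝ, ∃ t, M < w t)) := by
  refine ⟨fun h => ⟨fun H hH _ => exists_isCompact_superset_of_isCompact_sublevels h hH
    hw.continuousOn, compactSpace_or_forall_exists_lt_of_isCompact_sublevels h⟩, ?_⟩
  rintro ⟨hsep, hX | hunbdd⟩ c
  · exact (isClosed_le hw continuous_const).isCompact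
  · obtain ⟨H₀, hH₀, hH₀x₀⟩ := exists_compact_mem_nhds x₀
    obtain ⟨t₁, ht₁⟩ := hunbdd c
    exact isCompact_setOf_le_of_lt hw hsep hH₀ hH₀x₀ ht₁

end Sublevels

theorem forall_pos_isCompact_setOf_le_one_div_iff {X : Type*} [TopologicalSpace X] {w : X → ℝ}
    (hw : ∀ x, 0 < w x) :
    (∀ ε > 0, IsCompact {x | ε ≤ 1 / w x}) ↔ ∀ c, IsCompact {x | w x ≤ c} := by
  have hset : ∀ ε > 0, {x | ε ≤ 1 / w x} = {x | w x ≤ 1 / ε} := fun ε hε => by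
    ext x
    exact le_one_div hε (hw x)
  refine ⟨fun h c => ?_, fun h ε hε => hset ε hε ▸ h (1 / ε)⟩
  rcases le_or_gt c 0 with hc | hc
  · convert isCompact_empty
    exact Set.eq_empty_of_forall_notMem fun x hx => (hc.trans_lt (hw x)).not_ge hx
  · simpa only [hset _ (one_div_pos.mpr hc), one_div_one_div] using h (1 / c) (one_div_pos.mpr hc)

theorem one_div_weight_zero_at_infty_iff_general
    {G : Type*} [AddCommGroup G] [TopologicalSpace G]
    [LocallyCompactSpace G]
    (w : G → ℝ) (hw_cont : Continuous w) (hw_pos : ∀ t : G, 0 < w t) :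
    (∀ ε > 0, IsCompact {t : G | ε ≤ 1 / w t}) ↔
      ((∀ H : Set G, IsCompact H → H ∈ nhds (0 : G) →
          ∃ K : Set G, IsCompact K ∧ H ⊆ K ∧ ∀ s ∈ K, ∀ t ∉ K, w s ≤ w t) ∧
        (CompactSpace G ∨ ∀ M : ℝ, ∃ t : G, M < w t)) := by
  rw [forall_pos_isCompact_setOf_le_one_div_iff hw_pos]
  exact forall_isCompact_sublevels_iff 0 hw_cont

/-- For a continuous positive function `w` on a locally compact abelian
Hausdorff group `G`, `1/w` vanishes at infinity iff condition (2.6) holds and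
(`G` is compact or `w` is unbounded). -/
theorem one_div_weight_zero_at_infty_iff
    {G : Type*} [AddCommGroup G] [TopologicalSpace G] [IsTopologicalAddGroup G]
    [LocallyCompactSpace G] [T2Space G]
    (w : G → ℝ) (hw_cont : Continuous w) (hw_pos : ∀ t : G, 0 < w t) :
    (∀ ε > 0, IsCompact {t : G | ε ≤ 1 / w t}) ↔
      ((∀ H : Set G, IsCompact H → H ∈ nhds (0 : G) →
          ∃ K : Set G, IsCompact K ∧ H ⊆ K ∧ ∀ s ∈ K, ∀ t ∉ K, w s ≤ w t) ∧
        (CompactSpace G ∨ ∀ M : ℝ, ∃ t : G, M < w t)) :=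
  one_div_weight_zero_at_infty_iff_general w hw_cont hw_pos
end

section
/- Let X be a complex Banach space, n ∈ ℕ, and p : ℝ → X a continuous function. Then Δ_t^{n+1} p = 0 for every t ∈ ℝ if and only if there exist x_0, x_1, …, x_n ∈ X such that p(t) = Σ_{k=0}^n t^k · x_k for all t ∈ ℝ. -/
/-!
If `Δ_h^[n+1] f = 0`, the values of `f` along a progression `y + ℕ • h` are determined by
the first `n + 1` of them, so `f` agrees there with the Lagrange interpolant of those values.
For real `f` the progression `(ℕ - b) / m` contains `ℕ`, so all these interpolants coincide
with the one on `ℕ`; thus `f` is a polynomial on `ℚ`, hence on `ℝ` by continuity.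
A vector-valued `p` is handled through the functionals `φ ∘ p`, whose interpolants at
`0, …, n` depend linearly on `p`.
-/

def fdiff {G X : Type*} [Add G] [Sub X] (h : G) (f : G → X) : G → X :=
  fun t => f (t + h) - f t

open Polynomial Finset

theorem fwdDiff_iter_pow_eq_zero_of_lt' {R : Type*} [CommRing R] (h : R) {j n : ℕ}
    (hjn : j < n) : (fwdDiff h)^[n] (fun r : R ↦ r ^ j) = 0 := by
  induction n generalizing j with
  | zero => omega
  | succ n ih =>
    have h_diff : fwdDiff h (fun r : R ↦ r ^ j) =
        ∑ i ∈ range j, (j.choose i * h ^ (j - i)) • fun r : R ↦ r ^ i := by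
      ext x
      simp only [fwdDiff, add_pow, sum_range_succ, tsub_self, pow_zero, mul_one, Nat.choose_self,
        Nat.cast_one, add_sub_cancel_right, Finset.sum_apply, Pi.smul_apply, smul_eq_mul]
      exact sum_congr rfl fun i _ ↦ by ring
    rw [Function.iterate_succ_apply, h_diff, fwdDiff_iter_finsetSum]
    exact sum_eq_zero fun i hi ↦ by
      rw [fwdDiff_iter_const_smul, ih (by have := mem_range.1 hi; omega), smul_zero]

theorem fwdDiff_iter_smul_const {M R G : Type*} [AddCommMonoid M] [Ring R] [AddCommGroup G]
    [Module R G] (h : M) (f : M → R) (g : G) (n : ℕ) :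
    (fwdDiff h)^[n] (fun y ↦ f y • g) = fun y ↦ (fwdDiff h)^[n] f y • g := by
  induction n generalizing f with
  | zero => rfl
  | succ n ih => rw [Function.iterate_succ_apply, fwdDiff_smul_const]; exact ih _

theorem fwdDiff_iter_comp {M G G' F : Type*} [AddCommMonoid M] [AddCommGroup G] [AddCommGroup G']
    [FunLike F G G'] [AddMonoidHomClass F G G'] (φ : F) (h : M) (f : M → G) (n : ℕ) :
    (fwdDiff h)^[n] (φ ∘ f) = φ ∘ (fwdDiff h)^[n] f := by
  ext y
  simp [fwdDiff_iter_eq_sum_shift, map_sum, map_zsmul]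

theorem fwdDiff_iter_sum_pow_smul_eq_zero {R E ι : Type*} [CommRing R] [AddCommGroup E]
    [Module R E] (h : R) (s : Finset ι) (e : ι → ℕ) (x : ι → E) {n : ℕ}
    (he : ∀ i ∈ s, e i < n) : (fwdDiff h)^[n] (fun t ↦ ∑ i ∈ s, t ^ e i • x i) = 0 := by
  rw [← Finset.sum_fn, fwdDiff_iter_finsetSum]
  refine sum_eq_zero fun i hi ↦ ?_
  rw [fwdDiff_iter_smul_const, fwdDiff_iter_pow_eq_zero_of_lt' h (he i hi)]
  ext
  simp

theorem Polynomial.fwdDiff_iter_eq_zero_of_degree_lt' {R : Type*} [CommRing R] (h : R)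
    {P : R[X]} {n : ℕ} (hP : P.natDegree < n) : (fwdDiff h)^[n] P.eval = 0 := by
  have hP_eval : P.eval = fun t ↦ ∑ i ∈ range n, t ^ i • P.coeff i := by
    ext t
    simp_rw [eval_eq_sum_range' hP, smul_eq_mul, mul_comm]
  rw [hP_eval]
  exact fwdDiff_iter_sum_pow_smul_eq_zero h _ id _ fun i ↦ mem_range.1

theorem apply_add_nsmul_eq_zero_of_fwdDiff_iter_eq_zero {M G : Type*} [AddCommMonoid M]
    [AddCommGroup G] {h y : M} {f : M → G} {n : ℕ} (hf : (fwdDiff h)^[n + 1] f = 0)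
    (h0 : ∀ k < n + 1, f (y + k • h) = 0) (k : ℕ) : f (y + k • h) = 0 := by
  induction k using Nat.strong_induction_on with
  | _ k ih =>
    obtain hk | hk := lt_or_ge k (n + 1)
    · exact h0 k hk
    obtain ⟨j, rfl⟩ := Nat.exists_eq_add_of_le' hk
    -- the last term of `Δ^[n+1] f (y + j • h)` is `f (y + (j + n + 1) • h)`, the others vanish
    have h_sum := congrFun hf (y + j • h)
    rw [fwdDiff_iter_eq_sum_shift, sum_range_succ, sum_eq_zero, zero_add] at h_sum
    · simpa [add_assoc, ← add_nsmul] using h_sum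
    · intro i hi
      rw [add_assoc, ← add_nsmul, ih _ (by have := mem_range.1 hi; omega), smul_zero]

theorem exists_polynomial_eq_of_fwdDiff_iter_eq_zero {K : Type*} [Field K] [CharZero K]
    {f : K → K} {h : K} (hh : h ≠ 0) {n : ℕ} (hf : (fwdDiff h)^[n + 1] f = 0) (y : K) :
    ∃ Q : K[X], Q.natDegree ≤ n ∧ ∀ k : ℕ, f (y + k • h) = Q.eval (y + k • h) := by
  set v : ℕ → K := fun k ↦ y + k • h
  have hv : Set.InjOn v (range (n + 1)) := fun a _ b _ hab ↦ by
    simpa [v, hh] using hab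
  set Q := Lagrange.interpolate (range (n + 1)) v (f ∘ v)
  have hQ_deg : Q.natDegree ≤ n := by
    have := natDegree_le_of_degree_le (Lagrange.degree_interpolate_le (f ∘ v) hv)
    rwa [card_range, Nat.add_sub_cancel] at this
  have hQ : (fwdDiff h)^[n + 1] (f - Q.eval) = 0 := by
    have := fwdDiff_iter_add h (f - Q.eval) Q.eval (n + 1)
    rwa [sub_add_cancel, hf, fwdDiff_iter_eq_zero_of_degree_lt' h (Nat.lt_succ_of_le hQ_deg),
      add_zero, eq_comm] at this
  refine ⟨Q, hQ_deg, fun k ↦ sub_eq_zero.1 ?_⟩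
  refine apply_add_nsmul_eq_zero_of_fwdDiff_iter_eq_zero (f := f - Q.eval) hQ (fun k hk ↦ ?_) k
  show f (v k) - Q.eval (v k) = 0
  rw [Lagrange.eval_interpolate_at_node _ hv (mem_range.2 hk)]
  exact sub_self _

theorem exists_polynomial_eq_of_continuous_of_fwdDiff_iter_eq_zero {f : ℝ → ℝ}
    (hf : Continuous f) {n : ℕ} (hΔ : ∀ h, (fwdDiff h)^[n + 1] f = 0) :
    ∃ P : ℝ[X], P.natDegree ≤ n ∧ f = P.eval := by
  obtain ⟨P, hP_deg, hP⟩ := exists_polynomial_eq_of_fwdDiff_iter_eq_zero one_ne_zero (hΔ 1) 0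
  have h_nat (j : ℕ) : f j = P.eval (j : ℝ) := by simpa using hP j
  -- The grid `(ℕ - b) / m` contains `ℕ`, so its interpolating polynomial is `P`.
  have h_grid (a b m : ℕ) (hm : m ≠ 0) : f ((a - b : ℝ) / m) = P.eval ((a - b : ℝ) / m) := by
    have hm' : (m : ℝ) ≠ 0 := Nat.cast_ne_zero.2 hm
    obtain ⟨Q, -, hQ⟩ := exists_polynomial_eq_of_fwdDiff_iter_eq_zero (inv_ne_zero hm')
      (hΔ (m : ℝ)⁻¹) (-b / m)
    have h_node (k : ℕ) : -b / m + k • (m : ℝ)⁻¹ = (k - b) / m := by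
      rw [nsmul_eq_mul]; ring
    have hQP : Q = P := by
      refine eq_of_infinite_eval_eq Q P <|
        Set.infinite_of_injective_forall_mem Nat.cast_injective fun j : ℕ ↦ ?_
      have h_j : (((b + j * m : ℕ) : ℝ) - b) / m = j := by push_cast; field_simp; ring
      rw [Set.mem_ofPred_eq, ← h_j, ← h_node, ← hQ, h_node, h_j, h_nat]
    rw [← h_node, hQ, hQP]
  refine ⟨P, hP_deg, Continuous.ext_on Rat.denseRange_cast hf P.continuous ?_⟩
  rintro _ ⟨r, rfl⟩
  have hr : (r : ℝ) = ((r.num.toNat : ℝ) - (-r.num).toNat) / r.den := by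
    have h_num := congrArg (Int.cast : ℤ → ℝ) (Int.toNat_sub_toNat_neg r.num)
    push_cast at h_num
    rw [Rat.cast_def, h_num]
  rw [hr]
  exact h_grid _ _ _ r.den_nz

theorem eq_sum_eval_lagrange_basis_smul_of_fwdDiff_iter_eq_zero {E ι : Type*} [AddCommGroup E]
    [TopologicalSpace E] [Module ℝ E] [SeparatingDual ℝ E] [DecidableEq ι] {p : ℝ → E}
    (hp : Continuous p) {n : ℕ} (hΔ : ∀ h, (fwdDiff h)^[n + 1] p = 0) {s : Finset ι}
    (hs : #s = n + 1) {v : ι → ℝ} (hv : Set.InjOn v s) (t : ℝ) :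
    p t = ∑ i ∈ s, (Lagrange.basis s v i).eval t • p (v i) := by
  refine (SeparatingDual.eq_iff_forall_dual_eq (R := ℝ)).2 fun φ ↦ ?_
  obtain ⟨P, hP_deg, hP⟩ := exists_polynomial_eq_of_continuous_of_fwdDiff_iter_eq_zero
    (φ.continuous.comp hp) fun h ↦ by rw [fwdDiff_iter_comp, hΔ]; ext; simp
  have hP_interp : P = Lagrange.interpolate s v (fun i ↦ φ (p (v i))) :=
    Lagrange.eq_interpolate_of_eval_eq _ hv
      ((degree_le_of_natDegree_le hP_deg).trans_lt (by rw [hs]; exact_mod_cast n.lt_succ_self))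
      fun i _ ↦ (congrFun hP (v i)).symm
  calc φ (p t) = P.eval t := congrFun hP t
    _ = φ (∑ i ∈ s, (Lagrange.basis s v i).eval t • p (v i)) := by
      simp [hP_interp, Lagrange.interpolate_apply, eval_finsetSum, mul_comm]

theorem sum_eval_smul_eq_sum_pow_smul {R E ι : Type*} [CommSemiring R] [AddCommMonoid E]
    [Module R E] (s : Finset ι) (q : ι → R[X]) (v : ι → E) {n : ℕ}
    (hq : ∀ i ∈ s, (q i).natDegree ≤ n) (t : R) :
    ∑ i ∈ s, (q i).eval t • v i =
      ∑ k : Fin (n + 1), t ^ (k : ℕ) • ∑ i ∈ s, (q i).coeff k • v i := by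
  simp_rw [Finset.smul_sum]
  rw [Finset.sum_comm]
  refine sum_congr rfl fun i hi ↦ ?_
  rw [eval_eq_sum_range' (Nat.lt_succ_of_le (hq i hi)), Finset.sum_smul,
    ← Fin.sum_univ_eq_sum_range (fun k ↦ ((q i).coeff k * t ^ k) • v i)]
  simp_rw [smul_smul, mul_comm]

theorem poly_iff_monomial_sum_general
    {X : Type*} [NormedAddCommGroup X] [NormedSpace ℂ X]
    (n : ℕ) (p : ℝ → X) (hp : Continuous p) :
    (∀ t : ℝ, (fdiff t)^[n + 1] p = 0) ↔
      ∃ x : Fin (n + 1) → X, ∀ t : ℝ, p t = ∑ k : Fin (n + 1), t ^ (k : ℕ) • x k := by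
  constructor
  · intro hΔ
    have h_inj : Set.InjOn (Nat.cast : ℕ → ℝ) (range (n + 1)) := Nat.cast_injective.injOn
    refine ⟨fun k ↦ ∑ i ∈ range (n + 1),
      (Lagrange.basis (range (n + 1)) (Nat.cast : ℕ → ℝ) i).coeff k • p (i : ℝ), fun t ↦ ?_⟩
    rw [eq_sum_eval_lagrange_basis_smul_of_fwdDiff_iter_eq_zero hp hΔ (card_range _) h_inj t]
    refine sum_eval_smul_eq_sum_pow_smul _ _ _ (fun i hi ↦ ?_) t
    rw [Lagrange.natDegree_basis h_inj hi, card_range, Nat.add_sub_cancel]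
  · rintro ⟨x, hx⟩ t
    rw [funext hx]
    exact fwdDiff_iter_sum_pow_smul_eq_zero t univ Fin.val x fun k _ ↦ k.is_lt

/-- a continuous `p : ℝ → X` satisfies `Δ_t^{n+1} p = 0` for all `t`
iff it is an ordinary polynomial of degree at most `n` with coefficients in `X`. -/
theorem poly_iff_monomial_sum
    {X : Type*} [NormedAddCommGroup X] [NormedSpace ℂ X] [CompleteSpace X]
    (n : ℕ) (p : ℝ → X) (hp : Continuous p) :
    (∀ t : ℝ, (fdiff t)^[n + 1] p = 0) ↔
      ∃ x : Fin (n + 1) → X, ∀ t : ℝ, p t = ∑ k : Fin (n + 1), t ^ (k : ℕ) • x k :=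
  poly_iff_monomial_sum_general n p hp
end

section
/- Let G be a Hausdorff topological abelian group, X a complex Banach space, and J ⊆ G a subsemigroup containing 0, with nonempty interior, such that G = J − J = {u − v : u, v ∈ J}. Fix n ∈ ℕ. Then for every continuous q : J → X with Δ_v^{n+1} q = 0 for all v ∈ J there exists a unique continuous p : G → X with Δ_t^{n+1} p = 0 for all t ∈ G whose restriction to J equals q. In particular the restriction map P^n(G,X) → P^n(J,X) is a linear bijection. -/
/-!
Extend `q` by Newton extrapolation: `p g` is the value at `g` of the polynomial of degree `≤ n`
through `q (g + w), …, q (g + (n + 1) • w)`, for any `w ∈ J` with `g + w ∈ J`. Extrapolations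
in two directions commute, which makes `p g` independent of `w`; they also commute with
differences, which makes `p` a polynomial in every direction `t ∈ J`. A direction `u - v` is
reached along the line `m ↦ u + m • v`: `Δ_{u + m • v}^{n+1} p x` is a polynomial in `m ∈ ℤ`
vanishing on `ℕ`, hence at `m = -1`. A polynomial is its own extrapolation, which gives
uniqueness, and near any point `p` is a combination of translates of `q` at interior points of
`J`, which gives continuity.
-/

open Finset

section Extrapolate

variable {M X : Type*} [AddCommMonoid M] [AddCommGroup X]

/-- The value at `x` of the polynomial of degree `< N` through `f (x + h), …, f (x + N • h)`. -/
def extrapolate (N : ℕ) (h : M) (f : M → X) (x : M) : X :=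
  ∑ k ∈ range N, ((-1 : ℤ) ^ k * N.choose (k + 1)) • f (x + (k + 1) • h)

lemma extrapolate_eq_sub (N : ℕ) (h : M) (f : M → X) (x : M) :
    extrapolate N h f x = f x - (-1 : ℤ) ^ N • (fwdDiff h)^[N] f x := by
  have hsign : ∀ k < N, (-1 : ℤ) ^ N * (-1) ^ (N - (k + 1)) = -(-1) ^ k := by
    intro k hk
    obtain ⟨j, rfl⟩ := Nat.exists_eq_add_of_lt hk
    rw [show k + j + 1 - (k + 1) = j by omega, pow_add, pow_add, pow_one]
    have : ((-1 : ℤ) ^ j) ^ 2 = 1 := by rw [← pow_mul, mul_comm, pow_mul]; simp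
    linear_combination (-(-1 : ℤ) ^ k) * this
  have hshift : ∑ k ∈ range N, (-1 : ℤ) ^ N • (((-1 : ℤ) ^ (N - (k + 1)) *
      N.choose (k + 1)) • f (x + (k + 1) • h)) = -extrapolate N h f x := by
    rw [extrapolate, ← sum_neg_distrib]
    refine sum_congr rfl fun k hk => ?_
    rw [smul_smul, ← mul_assoc, hsign k (mem_range.1 hk), neg_mul, neg_smul]
  have hzero : (-1 : ℤ) ^ N • (((-1 : ℤ) ^ (N - 0) * N.choose 0) • f (x + (0 : ℕ) • h)) =
      f x := by
    simp [smul_smul, ← pow_add, ← two_mul, pow_mul]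
  rw [fwdDiff_iter_eq_sum_shift, sum_range_succ', smul_add, smul_sum, hshift, hzero]
  abel

lemma extrapolate_of_fwdDiff_iter_eq_zero {N : ℕ} {h : M} {f : M → X}
    (hf : (fwdDiff h)^[N] f = 0) : extrapolate N h f = f := by
  funext x
  rw [extrapolate_eq_sub, hf, Pi.zero_apply, smul_zero, sub_zero]

lemma extrapolate_congr {N : ℕ} {h : M} {f f' : M → X} {x : M}
    (hff' : ∀ k : ℕ, f (x + (k + 1) • h) = f' (x + (k + 1) • h)) :
    extrapolate N h f x = extrapolate N h f' x :=
  sum_congr rfl fun k _ => by rw [hff']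

lemma extrapolate_eq_zero {N : ℕ} {h : M} {f : M → X} {x : M}
    (hf : ∀ k : ℕ, f (x + (k + 1) • h) = 0) : extrapolate N h f x = 0 :=
  sum_eq_zero fun k _ => by rw [hf, smul_zero]

lemma extrapolate_comm (N : ℕ) (h h' : M) (f : M → X) :
    extrapolate N h (extrapolate N h' f) = extrapolate N h' (extrapolate N h f) := by
  funext x
  simp only [extrapolate, smul_sum, smul_smul]
  rw [sum_comm]
  refine sum_congr rfl fun k _ => sum_congr rfl fun l _ => ?_
  rw [mul_comm, add_right_comm]

lemma fwdDiff_iter_extrapolate (m N : ℕ) (t h : M) (f : M → X) :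
    (fwdDiff t)^[m] (extrapolate N h f) = extrapolate N h ((fwdDiff t)^[m] f) := by
  have : extrapolate N h f = ∑ k ∈ range N,
      ((-1 : ℤ) ^ k * N.choose (k + 1)) • fun x => f (x + (k + 1) • h) := by
    funext x; simp [extrapolate]
  funext x
  simp [this, fwdDiff_iter_comp_add, extrapolate]

lemma continuousAt_extrapolate [TopologicalSpace M] [ContinuousAdd M] [TopologicalSpace X]
    [IsTopologicalAddGroup X] {N : ℕ} {h : M} {f : M → X} {x : M}
    (hf : ∀ k : ℕ, ContinuousAt f (x + (k + 1) • h)) :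
    ContinuousAt (extrapolate N h f) x := by
  unfold extrapolate
  refine tendsto_finsetSum _ fun k _ => Filter.Tendsto.const_smul ?_ _
  exact (hf k).comp (x := x) (continuous_add_const _).continuousAt

end Extrapolate

section Line

variable {G X : Type*} [AddCommGroup G] [AddCommGroup X]

lemma fwdDiff_iter_comp_zsmul (N : ℕ) (f : G → X) (y h : G) (m : ℤ) :
    (fwdDiff 1)^[N] (fun m : ℤ => f (y + m • h)) m = (fwdDiff h)^[N] f (y + m • h) := by
  simp [fwdDiff_iter_eq_sum_shift, add_smul, add_assoc]

lemma eq_zero_of_fwdDiff_iter_eq_zero_of_natCast {N : ℕ} {φ : ℤ → X}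
    (hφ : (fwdDiff 1)^[N] φ = 0) (h0 : ∀ m : ℕ, φ m = 0) : φ = 0 := by
  have key : ∀ j : ℕ, ∀ m : ℤ, -j ≤ m → φ m = 0 := by
    intro j
    induction j with
    | zero =>
      intro m hm
      lift m to ℕ using by simpa using hm
      exact h0 m
    | succ j ih =>
      intro m hm
      rcases (show -(j : ℤ) ≤ m ∨ m = -(j + 1) by omega) with h | rfl
      · exact ih m h
      · rw [← extrapolate_of_fwdDiff_iter_eq_zero hφ]
        refine extrapolate_eq_zero fun k => ih _ ?_
        simp only [nsmul_eq_mul, mul_one]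
        push_cast
        omega
  funext m
  exact key m.natAbs m (by omega)

end Line

section Submonoid

variable {M X : Type*} [AddCommMonoid M] [AddCommGroup X] {S : AddSubmonoid M} {N : ℕ}
  {q : M → X}

lemma add_succ_nsmul_mem {x w : M} (hxw : x + w ∈ S) (hw : w ∈ S) (k : ℕ) :
    x + (k + 1) • w ∈ S := by
  rw [succ_nsmul', ← add_assoc]
  exact add_mem hxw (nsmul_mem hw k)

lemma extrapolate_eq_self_of_mem (hq : ∀ v ∈ S, ∀ t ∈ S, (fwdDiff v)^[N] q t = 0) {w y : M}
    (hw : w ∈ S) (hy : y ∈ S) : extrapolate N w q y = q y := by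
  rw [extrapolate_eq_sub, hq w hw y hy, smul_zero, sub_zero]

lemma extrapolate_eq_extrapolate (hq : ∀ v ∈ S, ∀ t ∈ S, (fwdDiff v)^[N] q t = 0)
    {g w w' : M} (hw : w ∈ S) (hw' : w' ∈ S) (hgw : g + w ∈ S) (hgw' : g + w' ∈ S) :
    extrapolate N w q g = extrapolate N w' q g := by
  have key : ∀ {a b : M}, a ∈ S → b ∈ S → g + a ∈ S →
      extrapolate N a (extrapolate N b q) g = extrapolate N a q g := fun ha hb hga =>
    extrapolate_congr fun k => extrapolate_eq_self_of_mem hq hb (add_succ_nsmul_mem hga ha k)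
  rw [← key hw hw' hgw, extrapolate_comm, key hw' hw hgw']

lemma eq_extrapolate_of_eqOn {p : M → X} {w g : M} (hp : (fwdDiff w)^[N] p = 0)
    (hpq : ∀ t ∈ S, p t = q t) (hw : w ∈ S) (hgw : g + w ∈ S) :
    p g = extrapolate N w q g := by
  rw [← extrapolate_of_fwdDiff_iter_eq_zero hp]
  exact extrapolate_congr fun k => hpq _ (add_succ_nsmul_mem hgw hw k)

lemma fwdDiff_iter_eq_zero_of_eq_extrapolate {p : M → X}
    (hq : ∀ v ∈ S, ∀ t ∈ S, (fwdDiff v)^[N] q t = 0) (hgen : ∀ x, ∃ w ∈ S, x + w ∈ S)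
    (hp : ∀ g, ∀ w ∈ S, g + w ∈ S → p g = extrapolate N w q g) {t : M} (ht : t ∈ S) :
    (fwdDiff t)^[N] p = 0 := by
  funext x
  obtain ⟨w, hw, hxw⟩ := hgen x
  have hpE : ∀ k : ℕ, p (x + k • t) = extrapolate N w q (x + k • t) := fun k =>
    hp _ w hw (by rw [add_right_comm]; exact add_mem hxw (nsmul_mem ht k))
  calc (fwdDiff t)^[N] p x = (fwdDiff t)^[N] (extrapolate N w q) x := by
        simp only [fwdDiff_iter_eq_sum_shift, hpE]
    _ = extrapolate N w ((fwdDiff t)^[N] q) x := by rw [fwdDiff_iter_extrapolate]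
    _ = 0 := extrapolate_eq_zero fun k => hq t ht _ (add_succ_nsmul_mem hxw hw k)

end Submonoid

section Group

variable {G X : Type*} [AddCommGroup G] [AddCommGroup X]

lemma fwdDiff_iter_sub_eq_zero {S : AddSubmonoid G} {N : ℕ} {f : G → X}
    (hf : ∀ s ∈ S, (fwdDiff s)^[N] f = 0) {u v : G} (hu : u ∈ S) (hv : v ∈ S) :
    (fwdDiff (u - v))^[N] f = 0 := by
  funext x
  set D : ℤ → X := fun m => (fwdDiff (u + m • v))^[N] f x with hD
  have hD_nat : ∀ m : ℕ, D m = 0 := fun m => by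
    simp only [hD, natCast_zsmul]
    rw [hf _ (add_mem hu (nsmul_mem hv m))]
    rfl
  have hD_line : D = ∑ k ∈ range (N + 1),
      ((-1 : ℤ) ^ (N - k) * N.choose k) • fun m : ℤ => f (x + k • u + m • (k • v)) := by
    funext m
    simp only [hD, fwdDiff_iter_eq_sum_shift, Finset.sum_apply, Pi.smul_apply]
    refine sum_congr rfl fun k _ => ?_
    rw [smul_add, smul_comm m k v, add_assoc]
  have hD_poly : (fwdDiff 1)^[N] D = 0 := by
    rw [hD_line, fwdDiff_iter_finsetSum]
    refine sum_eq_zero fun k _ => ?_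
    funext m
    rw [fwdDiff_iter_const_smul, Pi.smul_apply, fwdDiff_iter_comp_zsmul, hf _ (nsmul_mem hv k)]
    simp
  have hD_zero := eq_zero_of_fwdDiff_iter_eq_zero_of_natCast hD_poly hD_nat
  simpa [hD, sub_eq_add_neg] using congr_fun hD_zero (-1)

variable [TopologicalSpace G] [IsTopologicalAddGroup G]

lemma add_mem_interior {S : AddSubmonoid G} {x s : G} (hx : x ∈ interior (S : Set G))
    (hs : s ∈ S) : x + s ∈ interior (S : Set G) := by
  have : (· + s) '' interior (S : Set G) ⊆ interior S :=
    ((isOpenMap_add_right s).image_interior_subset _).trans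
      (interior_mono (by rintro _ ⟨y, hy, rfl⟩; exact add_mem hy hs))
  exact this ⟨x, hx, rfl⟩

lemma continuous_of_eq_extrapolate [TopologicalSpace X] [IsTopologicalAddGroup X]
    {S : AddSubmonoid G} {N : ℕ} {q p : G → X} (hq : ContinuousOn q S)
    (hint : (interior (S : Set G)).Nonempty) (hgen : ∀ x, ∃ w ∈ S, x + w ∈ S)
    (hp : ∀ g, ∀ w ∈ S, g + w ∈ S → p g = extrapolate N w q g) : Continuous p := by
  refine continuous_iff_continuousAt.2 fun g => ?_
  obtain ⟨z, hz⟩ := hint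
  obtain ⟨v, hv, hgv⟩ := hgen g
  have hw : v + z ∈ S := add_mem hv (interior_subset hz)
  have hgw : g + (v + z) ∈ interior (S : Set G) := by
    rw [← add_assoc, add_comm]
    exact add_mem_interior hz hgv
  have hE : ContinuousAt (extrapolate N (v + z) q) g := continuousAt_extrapolate fun k =>
    hq.continuousAt <| mem_interior_iff_mem_nhds.1 <| by
      rw [succ_nsmul', ← add_assoc]
      exact add_mem_interior hgw (nsmul_mem hw k)
  refine hE.congr ?_
  filter_upwards [(continuous_add_const (v + z)).continuousAt.preimage_mem_nhds
    (isOpen_interior.mem_nhds hgw)] with y hy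
  exact (hp y _ hw (interior_subset hy)).symm

end Group

theorem poly_extension_unique_general
    {G : Type*} [AddCommGroup G] [TopologicalSpace G] [IsTopologicalAddGroup G]
    {X : Type*} [NormedAddCommGroup X]
    (J : Set G) (hJ0 : (0 : G) ∈ J)
    (hJadd : ∀ a ∈ J, ∀ b ∈ J, a + b ∈ J)
    (hJint : (interior J).Nonempty)
    (hJgen : ∀ g : G, ∃ u ∈ J, ∃ v ∈ J, g = u - v)
    (n : ℕ) (q : G → X) (hq_cont : ContinuousOn q J)
    (hq_poly : ∀ v ∈ J, ∀ t ∈ J, (fdiff v)^[n + 1] q t = 0) :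
    ∃! p : G → X, Continuous p ∧ (∀ t : G, (fdiff t)^[n + 1] p = 0) ∧ ∀ t ∈ J, p t = q t := by
  let S : AddSubmonoid G :=
    { carrier := J, add_mem' := fun ha hb => hJadd _ ha _ hb, zero_mem' := hJ0 }
  have hq : ∀ v ∈ S, ∀ t ∈ S, (fwdDiff v)^[n + 1] q t = 0 := hq_poly
  have hgen : ∀ g, ∃ w ∈ S, g + w ∈ S := fun g => by
    obtain ⟨u, hu, v, hv, rfl⟩ := hJgen g
    exact ⟨v, hv, by rwa [sub_add_cancel]⟩
  choose W hW hgW using id hgen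
  set p : G → X := fun g => extrapolate (n + 1) (W g) q g
  have hp : ∀ g, ∀ w ∈ S, g + w ∈ S → p g = extrapolate (n + 1) w q g := fun g _ hw hgw =>
    extrapolate_eq_extrapolate hq (hW g) hw (hgW g) hgw
  refine ⟨p, ⟨continuous_of_eq_extrapolate hq_cont hJint hgen hp, fun t => ?_,
    fun t ht => extrapolate_eq_self_of_mem hq (hW t) ht⟩, ?_⟩
  · obtain ⟨u, hu, v, hv, rfl⟩ := hJgen t
    exact fwdDiff_iter_sub_eq_zero
      (fun s hs => fwdDiff_iter_eq_zero_of_eq_extrapolate hq hgen hp hs) hu hv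
  · rintro p' ⟨-, hp'_poly, hp'_q⟩
    funext g
    exact eq_extrapolate_of_eqOn (hp'_poly (W g)) hp'_q (hW g) (hgW g)

/-- polynomials of degree at most `n` on a generating subsemigroup `J`
(`0 ∈ J`, nonempty interior, `G = J - J`) extend uniquely to polynomials on `G`;
i.e. the restriction map `P^n(G,X) → P^n(J,X)` is a bijection. -/
theorem poly_extension_unique
    {G : Type*} [AddCommGroup G] [TopologicalSpace G] [IsTopologicalAddGroup G] [T2Space G]
    {X : Type*} [NormedAddCommGroup X] [NormedSpace ℂ X] [CompleteSpace X]
    (J : Set G) (hJ0 : (0 : G) ∈ J)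
    (hJadd : ∀ a ∈ J, ∀ b ∈ J, a + b ∈ J)
    (hJint : (interior J).Nonempty)
    (hJgen : ∀ g : G, ∃ u ∈ J, ∃ v ∈ J, g = u - v)
    (n : ℕ) (q : G → X) (hq_cont : ContinuousOn q J)
    (hq_poly : ∀ v ∈ J, ∀ t ∈ J, (fdiff v)^[n + 1] q t = 0) :
    ∃! p : G → X, Continuous p ∧ (∀ t : G, (fdiff t)^[n + 1] p = 0) ∧ ∀ t ∈ J, p t = q t :=
  poly_extension_unique_general J hJ0 hJadd hJint hJgen n q hq_cont hq_poly
end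

section
/- Let G be a Hausdorff topological abelian group, X a complex Banach space, and J ⊆ G a subsemigroup containing 0, with nonempty interior, such that G = J − J = {u − v : u, v ∈ J}. Fix n ∈ ℕ and suppose that the complex vector space P^n(J,ℂ) is finite dimensional. Then for every p ∈ P^n(J,X) there exist finitely many q_1, …, q_k ∈ P^n(J,ℂ) and x_1, …, x_k ∈ X such that p(t) = Σ_{j=1}^k q_j(t) · x_j for all t ∈ J. -/
/-- `q` is a polynomial of degree at most `n` on `J`: continuous on `J` and all
iterated differences of order `n+1` by elements of `J` vanish on `J`. -/
def IsPolyOn {G X : Type*} [Add G] [TopologicalSpace G] [AddCommGroup X] [TopologicalSpace X]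
    (J : Set G) (n : ℕ) (q : G → X) : Prop :=
  ContinuousOn q J ∧ ∀ v ∈ J, ∀ t ∈ J, (fdiff v)^[n + 1] q t = 0

/-! The evaluation vectors `β t = (b_i t)_i`, `t ∈ J`, span a finite-dimensional space. A basis
`β (T_j)` chosen among them, with coordinate functionals `ℓ_j`, yields `q_j = ℓ_j ∘ β ∈ P^n(J,ℂ)`
such that `f t = Σ_j q_j t * f (T_j)` on `J` for every `f ∈ P^n(J,ℂ)`. Applying this to `φ ∘ p`
for every continuous functional `φ`, Hahn–Banach gives `p t = Σ_j q_j t • p (T_j)`. -/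

theorem Submodule.exists_finite_expansion_of_span {K V : Type*} [Field K] [AddCommGroup V]
    [Module K V] (S : Set V) [FiniteDimensional K (Submodule.span K S)] :
    ∃ (m : ℕ) (s : Fin m → V) (ℓ : Fin m → V →ₗ[K] K),
      (∀ j, s j ∈ S) ∧ ∀ v ∈ Submodule.span K S, v = ∑ j, ℓ j v • s j := by
  let b₀ := Module.Basis.ofSpan (Submodule.span_span_coe_preimage (R := K) (s := S)).ge
  have := Module.Finite.finite_basis b₀
  let b := b₀.reindex (Finite.equivFin _)
  choose ℓ hℓ using fun j => (b.coord j).exists_extend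
  refine ⟨_, fun j => b j, ℓ, fun j => ?_, fun v hv => ?_⟩
  · have hb : b j ∈ Set.range b₀ := b₀.range_reindex _ ▸ Set.mem_range_self j
    exact Module.Basis.ofSpan_subset (V := Submodule.span K S) _ hb
  · have hcoord : ∀ j, ℓ j v = b.repr ⟨v, hv⟩ j := fun j => LinearMap.congr_fun (hℓ j) ⟨v, hv⟩
    have hsum := congrArg Subtype.val (b.sum_repr ⟨v, hv⟩)
    simp only [Submodule.coe_sum, Submodule.coe_smul, ← hcoord] at hsum
    exact hsum.symm

section
variable {G X Y F : Type*} [Add G] [AddGroup X] [AddGroup Y] [FunLike F X Y]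
  [AddMonoidHomClass F X Y]

theorem fdiff_comp (L : F) (v : G) (f : G → X) : fdiff v (L ∘ f) = L ∘ fdiff v f := by
  funext t
  simp only [fdiff, Function.comp_apply, map_sub]

theorem iterate_fdiff_comp (L : F) (v : G) (m : ℕ) (f : G → X) :
    (fdiff v)^[m] (L ∘ f) = L ∘ (fdiff v)^[m] f := by
  induction m generalizing f with
  | zero => rfl
  | succ m ih => simp only [Function.iterate_succ_apply, fdiff_comp, ih]

end

section
variable {G X Y : Type*} [Add G] [TopologicalSpace G] [AddCommGroup X] [TopologicalSpace X]
  [AddCommGroup Y] [TopologicalSpace Y] {J : Set G} {n : ℕ}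

theorem IsPolyOn.comp {F : Type*} [FunLike F X Y] [AddMonoidHomClass F X Y]
    [ContinuousMapClass F X Y] {p : G → X} (hp : IsPolyOn J n p) (L : F) :
    IsPolyOn J n (L ∘ p) :=
  ⟨(map_continuous L).comp_continuousOn hp.1, fun v hv t ht => by
    rw [iterate_fdiff_comp, Function.comp_apply, hp.2 v hv t ht, map_zero]⟩

theorem IsPolyOn.pi {ι : Type*} {p : G → ι → X} (hp : ∀ i, IsPolyOn J n fun t => p t i) :
    IsPolyOn J n p :=
  ⟨continuousOn_pi.2 fun i => (hp i).1, fun v hv t ht => funext fun i =>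
    (congrFun (iterate_fdiff_comp (Pi.evalAddMonoidHom (fun _ => X) i) v (n + 1) p) t).symm.trans
      ((hp i).2 v hv t ht)⟩

end

theorem poly_eq_scalar_combination_general
    {G : Type*} [AddCommGroup G] [TopologicalSpace G]
    {X : Type*} [NormedAddCommGroup X] [NormedSpace ℂ X]
    (J : Set G)
    (n : ℕ)
    (hfin : ∃ (k : ℕ) (b : Fin k → (G → ℂ)), (∀ i, IsPolyOn J n (b i)) ∧
        ∀ q : G → ℂ, IsPolyOn J n q → ∃ c : Fin k → ℂ, ∀ t ∈ J, q t = ∑ i, c i * b i t)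
    (p : G → X) (hp : IsPolyOn J n p) :
    ∃ (k : ℕ) (qs : Fin k → (G → ℂ)) (xs : Fin k → X),
      (∀ j, IsPolyOn J n (qs j)) ∧ ∀ t ∈ J, p t = ∑ j, qs j t • xs j := by
  obtain ⟨k, b, hb, hspan⟩ := hfin
  set β : G → Fin k → ℂ := fun t i => b i t
  obtain ⟨m, s, ℓ, hsβ, hexpand⟩ := Submodule.exists_finite_expansion_of_span (K := ℂ) (β '' J)
  choose T hTJ hTs using hsβ
  have hβ : ∀ t ∈ J, β t = ∑ j, ℓ j (β t) • β (T j) := fun t ht => by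
    simpa only [hTs] using hexpand _ (Submodule.subset_span ⟨t, ht, rfl⟩)
  refine ⟨m, fun j t => ℓ j (β t), fun j => p (T j),
    fun j => (IsPolyOn.pi hb).comp (LinearMap.toContinuousLinearMap (ℓ j)), fun t ht => ?_⟩
  refine (SeparatingDual.eq_iff_forall_dual_eq (R := ℂ)).2 fun φ => ?_
  obtain ⟨c, hc⟩ := hspan _ (hp.comp φ)
  calc φ (p t) = c ⬝ᵥ β t := hc t ht
    _ = c ⬝ᵥ ∑ j, ℓ j (β t) • β (T j) := congrArg _ (hβ t ht)
    _ = ∑ j, ℓ j (β t) * φ (p (T j)) := by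
      simp only [dotProduct_sum, dotProduct_smul, smul_eq_mul]
      exact Finset.sum_congr rfl fun j _ => congrArg _ (hc _ (hTJ j)).symm
    _ = φ (∑ j, ℓ j (β t) • p (T j)) := by simp only [map_sum, map_smul, smul_eq_mul]

/-- if `P^n(J,ℂ)` is finite dimensional (i.e. spanned on `J` by finitely
many of its members), then `P^n(J,X) = P^n(J,ℂ) ⊗ X`: every `X`-valued polynomial on `J`
is a finite sum `Σ q_j(t) • x_j` with `q_j ∈ P^n(J,ℂ)` and `x_j ∈ X`. -/
theorem poly_eq_scalar_combination
    {G : Type*} [AddCommGroup G] [TopologicalSpace G] [IsTopologicalAddGroup G] [T2Space G]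
    {X : Type*} [NormedAddCommGroup X] [NormedSpace ℂ X] [CompleteSpace X]
    (J : Set G) (hJ0 : (0 : G) ∈ J)
    (hJadd : ∀ a ∈ J, ∀ b ∈ J, a + b ∈ J)
    (hJint : (interior J).Nonempty)
    (hJgen : ∀ g : G, ∃ u ∈ J, ∃ v ∈ J, g = u - v)
    (n : ℕ)
    (hfin : ∃ (k : ℕ) (b : Fin k → (G → ℂ)), (∀ i, IsPolyOn J n (b i)) ∧
        ∀ q : G → ℂ, IsPolyOn J n q → ∃ c : Fin k → ℂ, ∀ t ∈ J, q t = ∑ i, c i * b i t)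
    (p : G → X) (hp : IsPolyOn J n p) :
    ∃ (k : ℕ) (qs : Fin k → (G → ℂ)) (xs : Fin k → X),
      (∀ j, IsPolyOn J n (qs j)) ∧ ∀ t ∈ J, p t = ∑ j, qs j t • xs j :=
  poly_eq_scalar_combination_general J n hfin p hp
end

section
/- Let G be a locally compact abelian Hausdorff topological group, X a complex Banach space, J a closed subsemigroup of G containing 0, with nonempty interior, such that G = J − J. Let φ : J → X be uniformly continuous with Δ_sφ bounded for every s ∈ J, and fix h ∈ J. Then the following are equivalent: (i) Δ_hφ is Maak ergodic (with some mean); (ii) Δ_{n·h}φ is Maak ergodic for some integer n ≥ 1; (iii) Δ_{n·h}φ is Maak ergodic for every integer n ≥ 1. -/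
/-- `ψ : J → X` is Maak ergodic with mean `M`: for every `ε > 0` there is a nonempty
finite `F ⊆ J` with `‖(1/|F|) Σ_{u∈F} ψ(u+s) - M‖ < ε` for all `s ∈ J`. -/
def MaakOn {G : Type*} [AddCommMonoid G] {X : Type*} [NormedAddCommGroup X] [Module ℝ X]
    (J : Set G) (ψ : G → X) (M : X) : Prop :=
  ∀ ε > 0, ∃ F : Finset G, F.Nonempty ∧ ↑F ⊆ J ∧
    ∀ s ∈ J, ‖(F.card : ℝ)⁻¹ • (∑ u ∈ F, ψ (u + s)) - M‖ < ε

/-!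
Since `Δ_{n•h} φ t = ∑_{k<n} Δ_h φ (t + k•h)`, averaging over one Maak set `F` shows that a mean
`M` of `Δ_h φ` yields the mean `n • M` of `Δ_{n•h} φ`. Conversely, a Maak set `A` for
`Δ_{n•h} φ` only shows that the averages of `Δ_h φ` over the family `u + k•h`
(`u ∈ A`, `k < n`), counted with multiplicity, are uniformly close to `M / n`. To turn these into
averages over a set, average once more over a Følner set `E ⊆ J`: the boxes
`{∑ i, k i • d i | k i < R}` spanned by the finitely many shifts grow polynomially in `R`, so some
box is almost invariant under every shift, and as `Δ_h φ` is bounded on `J`, shifting `E` changes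
its averages only a little.
-/

open Finset Filter

section Averages

variable {ι X : Type*} [NormedAddCommGroup X]

lemma norm_inv_card_smul_sum_sub_le [NormedSpace ℝ X] {F : Finset ι} (hF : F.Nonempty)
    {f : ι → X} {b : X} {r : ℝ} (hf : ∀ i ∈ F, ‖f i - b‖ ≤ r) :
    ‖(#F : ℝ)⁻¹ • ∑ i ∈ F, f i - b‖ ≤ r := by
  have := (convex_closedBall b r).centerMass_mem (t := F) (w := fun _ => (1 : ℝ)) (z := f)
    (fun _ _ => zero_le_one) (by simpa using hF.card_pos) (by simpa [dist_eq_norm] using hf)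
  simpa [Finset.centerMass, dist_eq_norm] using this

lemma norm_sum_sub_sum_le_of_card_eq [DecidableEq ι] {s t : Finset ι} (hst : #s = #t)
    {f : ι → X} {C : ℝ} (hf : ∀ i ∈ s ∪ t, ‖f i‖ ≤ C) :
    ‖∑ i ∈ t, f i - ∑ i ∈ s, f i‖ ≤ 2 * C * #(t \ s) := by
  have bound : ∀ u ⊆ s ∪ t, ‖∑ i ∈ u, f i‖ ≤ #u * C := fun u hu =>
    (norm_sum_le_of_le u fun i hi => hf i (hu hi)).trans_eq (by rw [sum_const, nsmul_eq_mul])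
  rw [← sum_sdiff_sub_sum_sdiff]
  calc ‖∑ i ∈ t \ s, f i - ∑ i ∈ s \ t, f i‖
      ≤ ‖∑ i ∈ t \ s, f i‖ + ‖∑ i ∈ s \ t, f i‖ := norm_sub_le _ _
    _ ≤ #(t \ s) * C + #(s \ t) * C :=
        add_le_add (bound _ (sdiff_subset.trans subset_union_right))
          (bound _ (sdiff_subset.trans subset_union_left))
    _ = 2 * C * #(t \ s) := by rw [card_sdiff_comm hst]; ring

end Averages

lemma exists_le_one_add_mul_of_le_pow {g : ℕ → ℕ} {m : ℕ} (hg : 0 < g 1)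
    (hpoly : ∀ R, g R ≤ R ^ m) {δ : ℝ} (hδ : 0 < δ) :
    ∃ R, 1 ≤ R ∧ (g (R + 1) : ℝ) ≤ (1 + δ) * g R := by
  by_contra! hgrow
  have hexp : ∀ R, 1 ≤ R → (1 + δ) ^ R ≤ (1 + δ) * g R := by
    refine Nat.le_induction ?_ fun R hR ih => ?_
    · have : (1 : ℝ) ≤ g 1 := by exact_mod_cast hg
      nlinarith
    · calc (1 + δ) ^ (R + 1) = (1 + δ) * (1 + δ) ^ R := pow_succ' _ _
        _ ≤ (1 + δ) * ((1 + δ) * g R) := by gcongr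
        _ ≤ (1 + δ) * g (R + 1) := by gcongr; exact (hgrow R hR).le
  have hsmall := (tendsto_pow_const_div_const_pow_of_one_lt m (by linarith : 1 < 1 + δ)).eventually
    (gt_mem_nhds (inv_pos.mpr (by linarith : (0 : ℝ) < 1 + δ)))
  obtain ⟨R, hR, hR1⟩ := (hsmall.and (eventually_ge_atTop 1)).exists
  rw [div_lt_iff₀ (by positivity), inv_mul_eq_div, lt_div_iff₀ (by linarith)] at hR
  have hpolyR : (1 + δ) * g R ≤ (1 + δ) * (R : ℝ) ^ m := by
    gcongr; exact_mod_cast hpoly R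
  linarith [hexp R hR1]

section Folner

variable {G : Type*} [AddCommMonoid G] [DecidableEq G]
variable {ι : Type*} [Fintype ι] [DecidableEq ι]

def latticeBox (d : ι → G) (R : ℕ) : Finset G :=
  (Fintype.piFinset fun _ : ι => range R).image fun k => ∑ i, k i • d i

variable {d : ι → G} {R : ℕ}

lemma mem_latticeBox {x : G} :
    x ∈ latticeBox d R ↔ ∃ k : ι → ℕ, (∀ i, k i < R) ∧ ∑ i, k i • d i = x := by
  simp [latticeBox]

lemma card_latticeBox_le : #(latticeBox d R) ≤ R ^ Fintype.card ι :=
  card_image_le.trans (by simp)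

lemma zero_mem_latticeBox (hR : 0 < R) : (0 : G) ∈ latticeBox d R :=
  mem_latticeBox.2 ⟨0, fun _ => hR, by simp⟩

lemma latticeBox_subset_addSubmonoid (S : AddSubmonoid G) (hd : ∀ i, d i ∈ S) :
    (latticeBox d R : Set G) ⊆ S := by
  intro x hx
  obtain ⟨k, -, rfl⟩ := mem_latticeBox.1 hx
  exact S.sum_mem fun i _ => S.nsmul_mem (hd i) (k i)

lemma latticeBox_subset_succ : latticeBox d R ⊆ latticeBox d (R + 1) := by
  intro x hx
  obtain ⟨k, hk, rfl⟩ := mem_latticeBox.1 hx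
  exact mem_latticeBox.2 ⟨k, fun i => (hk i).trans (Nat.lt_succ_self R), rfl⟩

lemma add_mem_latticeBox_succ {x : G} (hx : x ∈ latticeBox d R) (i : ι) :
    x + d i ∈ latticeBox d (R + 1) := by
  obtain ⟨k, hk, rfl⟩ := mem_latticeBox.1 hx
  refine mem_latticeBox.2 ⟨k + Pi.single i (1 : ℕ), fun j => ?_, ?_⟩
  · have : (Pi.single i 1 : ι → ℕ) j ≤ 1 := by
      rcases eq_or_ne j i with rfl | hj <;> simp [*]
    simp only [Pi.add_apply]
    linarith [hk j]
  · simp [add_smul, sum_add_distrib]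

end Folner

lemma AddSubmonoid.exists_card_image_add_sdiff_le {G : Type*} [AddCommMonoid G] [DecidableEq G]
    (S : AddSubmonoid G) {ι : Type*} [Fintype ι] (d : ι → G) (hd : ∀ i, d i ∈ S)
    {δ : ℝ} (hδ : 0 < δ) :
    ∃ E : Finset G, E.Nonempty ∧ (E : Set G) ⊆ S ∧
      ∀ i, (#(E.image (· + d i) \ E) : ℝ) ≤ δ * #E := by
  classical
  obtain ⟨R, hR, hgrowth⟩ := exists_le_one_add_mul_of_le_pow (g := fun R => #(latticeBox d R))
    (card_pos.2 ⟨0, zero_mem_latticeBox one_pos⟩) (fun _ => card_latticeBox_le) hδ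
  refine ⟨latticeBox d R, ⟨0, zero_mem_latticeBox hR⟩,
    latticeBox_subset_addSubmonoid S hd, fun i => ?_⟩
  have hunion : (latticeBox d R).image (· + d i) ∪ latticeBox d R ⊆ latticeBox d (R + 1) :=
    union_subset (image_subset_iff.2 fun _ hx => add_mem_latticeBox_succ hx i)
      latticeBox_subset_succ
  have hcard := (card_sdiff_add_card ((latticeBox d R).image (· + d i)) _).trans_le
    (card_le_card hunion)
  have : ((#((latticeBox d R).image (· + d i) \ latticeBox d R) : ℕ) : ℝ)
      + #(latticeBox d R) ≤ #(latticeBox d (R + 1)) := by exact_mod_cast hcard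
  linarith

lemma fdiff_nsmul_eq_sum {G X : Type*} [AddMonoid G] [AddCommGroup X] (φ : G → X) (h : G)
    (n : ℕ) (t : G) : fdiff (n • h) φ t = ∑ k ∈ range n, fdiff h φ (t + k • h) := by
  simpa [fdiff, succ_nsmul, add_assoc] using (sum_range_sub (fun k => φ (t + k • h)) n).symm

section Maak

variable {G : Type*} [AddCommMonoid G] {X : Type*} [NormedAddCommGroup X] [NormedSpace ℝ X]

lemma norm_inv_card_smul_sum_add_sub_le [IsRightCancelAdd G] [DecidableEq G] {E : Finset G}
    (hE : E.Nonempty) {d : G} {f : G → X} {C : ℝ} (hf : ∀ x ∈ E ∪ E.image (· + d), ‖f x‖ ≤ C)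
    {δ : ℝ} (hinv : (#(E.image (· + d) \ E) : ℝ) ≤ δ * #E) :
    ‖(#E : ℝ)⁻¹ • ∑ e ∈ E, f (e + d) - (#E : ℝ)⁻¹ • ∑ e ∈ E, f e‖ ≤ 2 * C * δ := by
  have hEpos : (0 : ℝ) < #E := by exact_mod_cast hE.card_pos
  have hC0 : 0 ≤ C := (norm_nonneg _).trans (hf _ (mem_union_left _ hE.choose_spec))
  have hsum := norm_sum_sub_sum_le_of_card_eq
    (card_image_of_injective E (add_left_injective d)).symm hf
  rw [sum_image fun a _ b _ hab => add_left_injective d hab] at hsum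
  rw [← smul_sub, norm_smul, norm_inv, Real.norm_natCast, inv_mul_le_iff₀ hEpos]
  calc _ ≤ 2 * C * #(E.image (· + d) \ E) := hsum
    _ ≤ 2 * C * (δ * #E) := by gcongr
    _ = #E * (2 * C * δ) := by ring

lemma AddSubmonoid.exists_avg_near_of_shifted_avg_near [IsRightCancelAdd G] (S : AddSubmonoid G)
    {ψ : G → X} {C : ℝ} (hC : ∀ t ∈ S, ‖ψ t‖ ≤ C) {ι : Type*} {P : Finset ι} (hP : P.Nonempty)
    {p : ι → G} (hp : ∀ i ∈ P, p i ∈ S) {M : X} {r : ℝ}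
    (hM : ∀ s ∈ S, ‖(#P : ℝ)⁻¹ • ∑ i ∈ P, ψ (p i + s) - M‖ ≤ r) {η : ℝ} (hη : 0 < η) :
    ∃ E : Finset G, E.Nonempty ∧ (E : Set G) ⊆ S ∧
      ∀ s ∈ S, ‖(#E : ℝ)⁻¹ • ∑ e ∈ E, ψ (e + s) - M‖ ≤ r + η := by
  classical
  have hC0 : 0 ≤ C := (norm_nonneg _).trans (hC 0 S.zero_mem)
  obtain ⟨E, hE, hES, hinv⟩ := S.exists_card_image_add_sdiff_le (fun i : P => p i)
    (fun i => hp i i.2) (div_pos hη (by positivity : (0 : ℝ) < 2 * C + 1))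
  refine ⟨E, hE, hES, fun s hs => ?_⟩
  have hshift : ∀ i ∈ P, ‖(#E : ℝ)⁻¹ • ∑ e ∈ E, ψ (e + p i + s)
      - (#E : ℝ)⁻¹ • ∑ e ∈ E, ψ (e + s)‖ ≤ η := by
    intro i hi
    have hbound : ∀ x ∈ E ∪ E.image (· + p i), ‖ψ (x + s)‖ ≤ C := by
      intro x hx
      refine hC _ (S.add_mem ?_ hs)
      rcases mem_union.1 hx with hx | hx
      · exact hES hx
      · obtain ⟨e, he, rfl⟩ := mem_image.1 hx
        exact S.add_mem (hES he) (hp i hi)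
    refine (norm_inv_card_smul_sum_add_sub_le hE hbound (hinv ⟨i, hi⟩)).trans ?_
    rw [← mul_div_assoc, div_le_iff₀ (by positivity)]
    nlinarith
  have hswap : (#P : ℝ)⁻¹ • ∑ i ∈ P, (#E : ℝ)⁻¹ • ∑ e ∈ E, ψ (e + p i + s)
      = (#E : ℝ)⁻¹ • ∑ e ∈ E, (#P : ℝ)⁻¹ • ∑ i ∈ P, ψ (p i + (e + s)) := by
    simp only [smul_sum, smul_smul, mul_comm (#P : ℝ)⁻¹]
    rw [sum_comm]
    simp only [add_comm _ (p _), add_assoc]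
  calc ‖(#E : ℝ)⁻¹ • ∑ e ∈ E, ψ (e + s) - M‖
      ≤ ‖(#E : ℝ)⁻¹ • ∑ e ∈ E, ψ (e + s)
          - (#P : ℝ)⁻¹ • ∑ i ∈ P, (#E : ℝ)⁻¹ • ∑ e ∈ E, ψ (e + p i + s)‖
        + ‖(#E : ℝ)⁻¹ • ∑ e ∈ E, (#P : ℝ)⁻¹ • ∑ i ∈ P, ψ (p i + (e + s)) - M‖ := by
        rw [← hswap]; exact norm_sub_le_norm_sub_add_norm_sub _ _ _
    _ ≤ η + r := by
        gcongr
        · rw [norm_sub_rev]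
          exact norm_inv_card_smul_sum_sub_le hP hshift
        · exact norm_inv_card_smul_sum_sub_le hE fun e he => hM _ (S.add_mem (hES he) hs)
    _ = r + η := add_comm η r

variable (S : AddSubmonoid G) {φ : G → X} {h : G}

lemma MaakOn.fdiff_nsmul (hh : h ∈ S) {M : X} (hM : MaakOn S (fdiff h φ) M) (n : ℕ) :
    MaakOn S (fdiff (n • h) φ) (n • M) := by
  intro ε hε
  obtain ⟨F, hF, hFS, hFM⟩ := hM (ε / (n + 1)) (by positivity)
  refine ⟨F, hF, hFS, fun s hs => ?_⟩
  have hsplit : (#F : ℝ)⁻¹ • ∑ u ∈ F, fdiff (n • h) φ (u + s) - n • M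
      = ∑ k ∈ range n, ((#F : ℝ)⁻¹ • ∑ u ∈ F, fdiff h φ (u + (s + k • h)) - M) := by
    simp only [sum_sub_distrib, sum_const, card_range, smul_sum, ← add_assoc,
      fdiff_nsmul_eq_sum φ h n]
    rw [sum_comm]
  rw [hsplit]
  calc _ ≤ ∑ _k ∈ range n, ε / (n + 1) := norm_sum_le_of_le _ fun k _ =>
        (hFM _ (S.add_mem hs (S.nsmul_mem hh k))).le
    _ = n * (ε / (n + 1)) := by rw [sum_const, card_range, nsmul_eq_mul]
    _ < ε := by
        rw [mul_div_assoc', div_lt_iff₀ (by positivity)]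
        linarith

lemma MaakOn.of_fdiff_nsmul [IsRightCancelAdd G] (hh : h ∈ S) {C : ℝ}
    (hC : ∀ t ∈ S, ‖fdiff h φ t‖ ≤ C)
    {n : ℕ} (hn : 0 < n) {M : X} (hM : MaakOn S (fdiff (n • h) φ) M) :
    MaakOn S (fdiff h φ) ((n : ℝ)⁻¹ • M) := by
  intro ε hε
  obtain ⟨A, hA, hAS, hAM⟩ := hM (ε / 2) (by positivity)
  have hshifted : ∀ s ∈ S, ‖(#(A ×ˢ range n) : ℝ)⁻¹ •
      ∑ q ∈ A ×ˢ range n, fdiff h φ (q.1 + q.2 • h + s) - (n : ℝ)⁻¹ • M‖ ≤ ε / 2 := by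
    intro s hs
    have hn1 : (n : ℝ)⁻¹ ≤ 1 := inv_le_one_of_one_le₀ (by exact_mod_cast hn)
    have havg : (#(A ×ˢ range n) : ℝ)⁻¹ • ∑ q ∈ A ×ˢ range n, fdiff h φ (q.1 + q.2 • h + s)
        = (n : ℝ)⁻¹ • ((#A : ℝ)⁻¹ • ∑ u ∈ A, fdiff (n • h) φ (u + s)) := by
      simp only [sum_product, card_product, card_range, fdiff_nsmul_eq_sum, smul_smul,
        Nat.cast_mul, mul_inv, mul_comm (n : ℝ)⁻¹]
      simp only [add_right_comm]
    rw [havg, ← smul_sub, norm_smul, norm_inv, Real.norm_natCast]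
    exact (mul_le_of_le_one_left (norm_nonneg _) hn1).trans (hAM s hs).le
  obtain ⟨E, hE, hES, hEM⟩ := S.exists_avg_near_of_shifted_avg_near hC
    (hA.product (nonempty_range_iff.2 hn.ne')) (p := fun q => q.1 + q.2 • h)
    (fun q hq => S.add_mem (hAS (mem_product.1 hq).1) (S.nsmul_mem hh _)) hshifted
    (by positivity : 0 < ε / 4)
  exact ⟨E, hE, hES, fun s hs => (hEM s hs).trans_lt (by linarith)⟩

end Maak

theorem delta_ergodic_iff_iterates_general
    {G : Type*} [AddCommGroup G]
    {X : Type*} [NormedAddCommGroup X] [NormedSpace ℂ X]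
    (J : Set G) (hJ0 : (0 : G) ∈ J)
    (hJadd : ∀ a ∈ J, ∀ b ∈ J, a + b ∈ J)
    (φ : G → X)
    (hφ_bd : ∀ s ∈ J, ∃ C : ℝ, ∀ t ∈ J, ‖φ (t + s) - φ t‖ ≤ C)
    (h : G) (hh : h ∈ J) :
    ((∃ M, MaakOn J (fdiff h φ) M) ↔
        ∃ n : ℕ, 1 ≤ n ∧ ∃ M, MaakOn J (fdiff (n • h) φ) M) ∧
      ((∃ M, MaakOn J (fdiff h φ) M) ↔
        ∀ n : ℕ, 1 ≤ n → ∃ M, MaakOn J (fdiff (n • h) φ) M) := by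
  let S : AddSubmonoid G := ⟨⟨J, fun ha hb => hJadd _ ha _ hb⟩, hJ0⟩
  obtain ⟨C, hC⟩ := hφ_bd h hh
  have up : ∀ n : ℕ, (∃ M, MaakOn J (fdiff h φ) M) → ∃ M, MaakOn J (fdiff (n • h) φ) M :=
    fun n ⟨M, hM⟩ => ⟨n • M, MaakOn.fdiff_nsmul S hh hM n⟩
  have down : ∀ n : ℕ, 1 ≤ n → (∃ M, MaakOn J (fdiff (n • h) φ) M) →
      ∃ M, MaakOn J (fdiff h φ) M :=
    fun n hn ⟨M, hM⟩ => ⟨_, MaakOn.of_fdiff_nsmul S hh hC hn hM⟩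
  exact ⟨⟨fun hE => ⟨1, le_rfl, up 1 hE⟩, fun ⟨n, hn, hE⟩ => down n hn hE⟩,
    ⟨fun hE n _ => up n hE, fun hall => down 1 le_rfl (hall 1 le_rfl)⟩⟩

/-- Lemma 4.5(a): for `φ : J → X` uniformly continuous with bounded
differences and `h ∈ J`, the following are equivalent: `Δ_hφ` is Maak ergodic;
`Δ_{n·h}φ` is Maak ergodic for some `n ≥ 1`; `Δ_{n·h}φ` is Maak ergodic for all `n ≥ 1`. -/
theorem delta_ergodic_iff_iterates
    {G : Type*} [AddCommGroup G] [TopologicalSpace G] [IsTopologicalAddGroup G]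
    [LocallyCompactSpace G] [T2Space G]
    {X : Type*} [NormedAddCommGroup X] [NormedSpace ℂ X] [CompleteSpace X]
    (J : Set G) (hJcl : IsClosed J) (hJ0 : (0 : G) ∈ J)
    (hJadd : ∀ a ∈ J, ∀ b ∈ J, a + b ∈ J)
    (hJint : (interior J).Nonempty)
    (hJgen : ∀ g : G, ∃ u ∈ J, ∃ v ∈ J, g = u - v)
    (φ : G → X)
    (hφ_uc : ∀ ε > 0, ∃ U ∈ nhds (0 : G), ∀ t ∈ J, ∀ t' ∈ J, t' - t ∈ U → ‖φ t' - φ t‖ < ε)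
    (hφ_bd : ∀ s ∈ J, ∃ C : ℝ, ∀ t ∈ J, ‖φ (t + s) - φ t‖ ≤ C)
    (h : G) (hh : h ∈ J) :
    ((∃ M, MaakOn J (fdiff h φ) M) ↔
        ∃ n : ℕ, 1 ≤ n ∧ ∃ M, MaakOn J (fdiff (n • h) φ) M) ∧
      ((∃ M, MaakOn J (fdiff h φ) M) ↔
        ∀ n : ℕ, 1 ≤ n → ∃ M, MaakOn J (fdiff (n • h) φ) M) :=
  delta_ergodic_iff_iterates_general J hJ0 hJadd φ hφ_bd h hh
end

section
/- Let G be a locally compact abelian Hausdorff topological group, X a complex Banach space, J a closed subsemigroup of G containing 0, with nonempty interior, such that G = J − J, and let w be a standard weight on G. Let F be a closed linear subspace of BC_w(J,X) that is translation invariant (φ ∈ F and t ∈ J imply φ_t ∈ F). Suppose φ ∈ BC_w(J,X), p is a polynomial on J belonging to BC_w(J,X), (φ − p)/w is Maak ergodic with mean 0, and Δ_tφ ∈ F for every t ∈ J. Then φ − p belongs to the closure in (BC_w(J,X), ‖·‖_{w,∞}) of the subspace F + C_{w,0}(J,X); moreover, if w ≡ 1, then φ − p ∈ F. -/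
/-- A standard weight: conditions (1.1)-(1.3) and (2.1)-(2.3) of the paper. -/
def IsStdWeight {G : Type*} [AddCommGroup G] [TopologicalSpace G] (w : G → ℝ) : Prop :=
  Continuous w ∧ (∀ t : G, 1 ≤ w t) ∧ (∀ s t : G, w (s + t) ≤ w s * w t) ∧
    (∀ t : G, w (-t) = w t) ∧
    (∀ t : G, Summable fun n : ℕ => Real.log (w (n • t)) / (n : ℝ) ^ 2) ∧
    ((∀ t : G, w t = 1) ∨ ∀ ε > 0, IsCompact {t : G | ε ≤ 1 / w t}) ∧
    (∀ h : G, ∀ ε > 0, IsCompact {t : G | ε ≤ |(w (t + h) - w t) / w t|}) ∧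
    (∀ ε > 0, ∃ U ∈ nhds (0 : G), ∀ h ∈ U, ∀ t : G, |w (t + h) - w t| ≤ ε * w t)

/-- `ψ : J → X` is Maak ergodic with mean `M`. -/
def MaakMean {J : Type*} [AddCommMonoid J] {X : Type*} [NormedAddCommGroup X] [Module ℝ X]
    (ψ : J → X) (M : X) : Prop :=
  ∀ ε > 0, ∃ F : Finset J, F.Nonempty ∧
    ∀ s : J, ‖(F.card : ℝ)⁻¹ • (∑ u ∈ F, ψ (u + s)) - M‖ < ε

/-!
Let `ψ = (φ - p) / w` and let `F` be a finite set over which the translates of `ψ` average to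
at most `ε`. Averaging `Δ_u (φ - p) t = Δ_u w t • ψ (t + u) + w t • ψ (t + u) - (φ - p) t` over
`u ∈ F` gives `φ - p = -avg Δ_u φ + ξ + w • avg ψ (· + u)` with
`ξ = avg (Δ_u p + Δ_u w • ψ (· + u))`. The first term lies in `𝓕` and the last is at most `ε w`.
For a standard weight `Δ_u w = o(w)` at infinity, and a polynomial that is `O(w)` has differences
that are `o(w)` (induction on the degree: `n • Δ_u p` is a telescoped difference of `p` up to
`o(w)` terms), so `ξ = o(w)`. When `w ≡ 1`, the same estimate along the filter `⊤` shows that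
bounded polynomials have vanishing differences, so `ξ = 0` and closedness of `𝓕` finishes.
-/

open Filter Topology Asymptotics

section Difference

variable {M : Type*} [AddCommMonoid M] {X : Type*}

lemma sum_range_fdiff [AddCommGroup X] (h : M) (f : M → X) (t : M) (n : ℕ) :
    ∑ k ∈ Finset.range n, fdiff h f (t + k • h) = f (t + n • h) - f t := by
  simpa [fdiff, succ_nsmul, add_assoc] using Finset.sum_range_sub (fun k => f (t + k • h)) n

lemma Continuous.fdiff [TopologicalSpace M] [ContinuousAdd M] [TopologicalSpace X] [Sub X]
    [ContinuousSub X] {f : M → X} (hf : Continuous f) (h : M) : Continuous (fdiff h f) :=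
  (hf.comp (continuous_add_const h)).sub hf

lemma tendsto_add_nsmul {l : Filter M} {h : M} (hl : Tendsto (· + h) l l) (n : ℕ) :
    Tendsto (· + n • h) l l := by
  induction n with
  | zero => simp only [zero_smul, add_zero]; exact tendsto_id
  | succ n ih => simpa [Function.comp_def, succ_nsmul, add_assoc] using hl.comp ih

end Difference

section Polynomial

variable {M : Type*} [AddCommMonoid M] {X : Type*} [NormedAddCommGroup X] [NormedSpace ℝ X]
  {l : Filter M} {w : M → ℝ} {h : M} {K : ℝ}

lemma isLittleO_fdiff_of_iterate_fdiff_eq_zero (hl : Tendsto (· + h) l l)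
    (hw : ∀ n : ℕ, ∀ᶠ t in l, ‖w (t + n • h)‖ ≤ K * ‖w t‖) (m : ℕ) {p : M → X}
    (hp : (fdiff h)^[m + 1] p = 0) (hpw : p =O[l] w) : fdiff h p =o[l] w := by
  have hshift (n : ℕ) : (fun t => w (t + n • h)) =O[l] w := IsBigO.of_bound K (hw n)
  induction m generalizing p with
  | zero =>
    rw [zero_add, Function.iterate_one] at hp
    exact hp ▸ isLittleO_zero w l
  | succ m ih =>
    set q := fdiff h p
    have hq : q =O[l] w :=
      ((hpw.comp_tendsto hl).trans (by simpa [Function.comp_def] using hshift 1)).sub hpw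
    have hΔq : fdiff h q =o[l] w := ih (by rwa [← Function.iterate_succ_apply]) hq
    have hr (k : ℕ) : (fun t => q (t + k • h) - q t) =o[l] w := by
      simp_rw [← sum_range_fdiff]
      exact IsLittleO.fun_sum fun j _ =>
        (hΔq.comp_tendsto (tendsto_add_nsmul hl j)).trans_isBigO (hshift j)
    obtain ⟨C, hC0, hC⟩ := hpw.exists_nonneg
    refine IsLittleO.of_bound fun c hc => ?_
    obtain ⟨n, hn⟩ := exists_nat_gt ((C * |K| + C + 1) / c)
    have hn0 : (0 : ℝ) < n := (div_nonneg (by positivity) hc.le).trans_lt hn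
    filter_upwards [hC.bound, (tendsto_add_nsmul hl n).eventually hC.bound, hw n,
      (IsLittleO.fun_sum (s := Finset.range n) fun k _ => hr k).bound (c := 1) one_pos]
      with t ht htn hwt hsum
    -- telescoping `p` along `h` isolates `n • q t`
    have hnq : (n : ℝ) • q t = (p (t + n • h) - p t) -
        ∑ k ∈ Finset.range n, (q (t + k • h) - q t) := by
      rw [← sum_range_fdiff, Finset.sum_sub_distrib, Finset.sum_const, Finset.card_range,
        Nat.cast_smul_eq_nsmul]
      abel
    have hbound : n * ‖q t‖ ≤ (C * |K| + C + 1) * ‖w t‖ := by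
      calc n * ‖q t‖ = ‖(n : ℝ) • q t‖ := by rw [norm_smul, Real.norm_natCast]
      _ ≤ ‖p (t + n • h)‖ + ‖p t‖ + ‖∑ k ∈ Finset.range n, (q (t + k • h) - q t)‖ := by
        rw [hnq]; exact (norm_sub_le _ _).trans (by gcongr; exact norm_sub_le _ _)
      _ ≤ C * (|K| * ‖w t‖) + C * ‖w t‖ + 1 * ‖w t‖ := by
        gcongr; exact htn.trans (by gcongr; exact hwt.trans (by gcongr; exact le_abs_self K))
      _ = (C * |K| + C + 1) * ‖w t‖ := by ring
    rw [div_lt_iff₀ hc] at hn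
    nlinarith [norm_nonneg (w t), norm_nonneg (q t)]

lemma fdiff_eq_zero_of_iterate_fdiff_eq_zero {m : ℕ} {p : M → X} (hp : (fdiff h)^[m + 1] p = 0)
    (hpb : p =O[⊤] fun _ => (1 : ℝ)) : fdiff h p = 0 :=
  funext <| isLittleO_top.1 <|
    isLittleO_fdiff_of_iterate_fdiff_eq_zero (K := 1) tendsto_top (fun n => by simp) m hp hpb

end Polynomial

section Maak

variable {M : Type*} [AddCommMonoid M] {X : Type*} [NormedAddCommGroup X] [NormedSpace ℝ X]
  {w : M → ℝ} {φ p : M → X}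

noncomputable def maakCorrection (w : M → ℝ) (φ p : M → X) (F : Finset M) : M → X := fun t =>
  (F.card : ℝ)⁻¹ • ∑ u ∈ F, (fdiff u p t + fdiff u w t • (w (t + u))⁻¹ • (φ (t + u) - p (t + u)))

lemma MaakMean.exists_norm_sub_sub_maakCorrection_le (hw : ∀ t, 0 < w t)
    (hmean : MaakMean (fun t => (w t)⁻¹ • (φ t - p t)) 0) {ε : ℝ} (hε : 0 < ε) :
    ∃ F : Finset M, ∀ t, ‖(φ t - p t) -
      (-((F.card : ℝ)⁻¹ • ∑ u ∈ F, fdiff u φ t) + maakCorrection w φ p F t)‖ ≤ ε * w t := by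
  obtain ⟨F, hF, hFε⟩ := hmean ε hε
  refine ⟨F, fun t => ?_⟩
  have hcard : (F.card : ℝ) ≠ 0 := by exact_mod_cast hF.card_pos.ne'
  have hterm (u : M) : fdiff u φ t - (fdiff u p t +
      fdiff u w t • (w (t + u))⁻¹ • (φ (t + u) - p (t + u))) =
      w t • (w (u + t))⁻¹ • (φ (u + t) - p (u + t)) - (φ t - p t) := by
    rw [add_comm u t]
    simp only [fdiff, sub_smul, smul_inv_smul₀ (hw _).ne']
    abel
  have hsum : (φ t - p t) - (-((F.card : ℝ)⁻¹ • ∑ u ∈ F, fdiff u φ t) + maakCorrection w φ p F t) =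
      w t • ((F.card : ℝ)⁻¹ • ∑ u ∈ F, (w (u + t))⁻¹ • (φ (u + t) - p (u + t))) := by
    rw [maakCorrection, sub_add_eq_sub_sub, sub_neg_eq_add, add_sub_assoc, ← smul_sub,
      ← Finset.sum_sub_distrib, Finset.sum_congr rfl fun u _ => hterm u, Finset.sum_sub_distrib,
      ← Finset.smul_sum, Finset.sum_const, smul_sub, ← Nat.cast_smul_eq_nsmul ℝ,
      inv_smul_smul₀ hcard, smul_comm (F.card : ℝ)⁻¹ (w t)]
    abel
  rw [hsum, norm_smul, Real.norm_of_nonneg (hw t).le, mul_comm]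
  exact mul_le_mul_of_nonneg_right (by simpa using (hFε t).le) (hw t).le

lemma continuous_maakCorrection [TopologicalSpace M] [ContinuousAdd M] (hw : Continuous w)
    (hw0 : ∀ t, w t ≠ 0) (hφ : Continuous φ) (hp : Continuous p) (F : Finset M) :
    Continuous (maakCorrection w φ p F) :=
  continuous_const.smul <| continuous_finsetSum _ fun u _ =>
    (hp.fdiff u).add <| (hw.fdiff u).smul <|
      ((hw.inv₀ hw0).smul (hφ.sub hp)).comp (continuous_add_const u)

lemma isLittleO_maakCorrection {l : Filter M} {F : Finset M} (hw0 : ∀ t, w t ≠ 0)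
    (hp : ∀ u ∈ F, fdiff u p =o[l] w) (hw : ∀ u ∈ F, fdiff u w =o[l] w)
    (hφp : (fun t => φ t - p t) =O[⊤] w) : maakCorrection w φ p F =o[l] w := by
  have hψ : (fun t => (w t)⁻¹ • (φ t - p t)) =O[⊤] fun _ => (1 : ℝ) :=
    ((isBigO_refl (fun t => (w t)⁻¹) ⊤).smul hφp).congr_right fun t => inv_mul_cancel₀ (hw0 t)
  refine (IsLittleO.fun_sum fun u hu => (hp u hu).add ?_).const_smul_left _
  exact ((hw u hu).smul_isBigO (hψ.comp_tendsto tendsto_top)).congr_right fun t => mul_one (w t)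

lemma maakCorrection_eq_zero {F : Finset M} (hp : ∀ u ∈ F, fdiff u p = 0)
    (hw : ∀ u ∈ F, fdiff u w = 0) : maakCorrection w φ p F = 0 :=
  funext fun t => by simp +contextual [maakCorrection, Finset.sum_eq_zero, hp, hw]

end Maak

section Cocompact

variable {T : Type*} [TopologicalSpace T]

lemma tendsto_cocompact_of_isCompact_setOf_le_abs {f : T → ℝ}
    (hf : ∀ ε > 0, IsCompact {t | ε ≤ |f t|}) : Tendsto f (cocompact T) (𝓝 0) := by
  refine Metric.tendsto_nhds.2 fun ε hε => mem_cocompact.2 ⟨_, hf ε hε, fun t ht => ?_⟩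
  simpa [Real.dist_eq] using ht

lemma Asymptotics.IsLittleO.isCompact_setOf_le_norm_div {X : Type*} [NormedAddCommGroup X]
    {ξ : T → X} {w : T → ℝ} (hξ : Continuous ξ) (hw : Continuous w) (hw0 : ∀ t, w t ≠ 0)
    (h : ξ =o[cocompact T] w) {δ : ℝ} (hδ : 0 < δ) : IsCompact {t | δ ≤ ‖ξ t‖ / w t} := by
  obtain ⟨K, hK, hKξ⟩ := mem_cocompact.1 (h.norm_left.tendsto_div_nhds_zero (Iio_mem_nhds hδ))
  exact hK.of_isClosed_subset (isClosed_le continuous_const (hξ.norm.div hw hw0))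
    fun t (ht : δ ≤ ‖ξ t‖ / w t) => by_contra fun htK => absurd (hKξ htK) (not_lt.2 ht)

lemma Topology.IsClosedEmbedding.comap_cocompact {Y : Type*} [TopologicalSpace Y] {f : T → Y}
    (hf : IsClosedEmbedding f) : comap f (cocompact Y) = cocompact T :=
  (comap_cocompact_le hf.continuous).antisymm hf.tendsto_cocompact.le_comap

end Cocompact

namespace IsStdWeight

variable {G : Type*} [AddCommGroup G] [TopologicalSpace G] {w : G → ℝ}

lemma pos (hw : IsStdWeight w) (t : G) : 0 < w t :=
  one_pos.trans_le (hw.2.1 t)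

lemma isLittleO_fdiff (hw : IsStdWeight w) (x : G) : fdiff x w =o[cocompact G] w := by
  rw [isLittleO_iff_tendsto' (.of_forall fun t ht => absurd ht (hw.pos t).ne')]
  obtain ⟨-, -, -, -, -, -, hvanish, -⟩ := hw
  exact tendsto_cocompact_of_isCompact_setOf_le_abs (hvanish x)

lemma eventually_norm_add_le (hw : IsStdWeight w) (x : G) :
    ∀ᶠ t in cocompact G, ‖w (t + x)‖ ≤ 2 * ‖w t‖ := by
  filter_upwards [(hw.isLittleO_fdiff x).bound one_pos] with t ht
  calc ‖w (t + x)‖ ≤ ‖fdiff x w t‖ + ‖w t‖ := by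
        simpa [fdiff] using norm_add_le (fdiff x w t) (w t)
  _ ≤ 2 * ‖w t‖ := by linarith

end IsStdWeight

section Submonoid

variable {G : Type*} [AddCommGroup G] [TopologicalSpace G] {S : AddSubmonoid G} {w : G → ℝ}

lemma AddSubmonoid.comap_coe_cocompact (hS : IsClosed (S : Set G)) :
    Filter.comap ((↑) : S → G) (cocompact G) = cocompact S :=
  hS.isClosedEmbedding_subtypeVal.comap_cocompact

lemma AddSubmonoid.tendsto_add_cocompact [IsTopologicalAddGroup G] (hS : IsClosed (S : Set G))
    (h : S) :
    Tendsto (· + h) (cocompact S) (cocompact S) := by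
  rw [← S.comap_coe_cocompact hS]
  exact tendsto_comap_iff.2 <|
    (Homeomorph.addRight (h : G)).isClosedEmbedding.tendsto_cocompact.comp tendsto_comap

lemma IsStdWeight.isLittleO_fdiff_subtype (hw : IsStdWeight w) (hS : IsClosed (S : Set G))
    (u : S) : fdiff u (fun t : S => w t) =o[cocompact S] fun t => w t := by
  rw [← S.comap_coe_cocompact hS]
  exact (hw.isLittleO_fdiff u).comp_tendsto tendsto_comap

lemma IsStdWeight.isLittleO_fdiff_of_iterate_fdiff_eq_zero [IsTopologicalAddGroup G] {X : Type*}
    [NormedAddCommGroup X] [NormedSpace ℝ X] (hw : IsStdWeight w) (hS : IsClosed (S : Set G))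
    (m : ℕ) {p : S → X}
    (hp : ∀ u : S, (fdiff u)^[m + 1] p = 0) (hpw : p =O[⊤] fun t => w t) (u : S) :
    fdiff u p =o[cocompact S] fun t => w t := by
  refine _root_.isLittleO_fdiff_of_iterate_fdiff_eq_zero (K := 2) (S.tendsto_add_cocompact hS u)
    (fun n => ?_) m (hp u) (hpw.mono le_top)
  rw [← S.comap_coe_cocompact hS]
  exact (hw.eventually_norm_add_le _).comap _

end Submonoid

theorem difference_theorem_general
    {G : Type*} [AddCommGroup G] [TopologicalSpace G] [IsTopologicalAddGroup G]
    {X : Type*} [NormedAddCommGroup X] [NormedSpace ℂ X]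
    (w : G → ℝ) (hw : IsStdWeight w)
    (S : AddSubmonoid G) (hScl : IsClosed (S : Set G))
    (𝓕 : Set (↥S → X))
    (h𝓕zero : (0 : ↥S → X) ∈ 𝓕)
    (h𝓕add : ∀ ψ ∈ 𝓕, ∀ χ ∈ 𝓕, ψ + χ ∈ 𝓕)
    (h𝓕smul : ∀ c : ℂ, ∀ ψ ∈ 𝓕, c • ψ ∈ 𝓕)
    (h𝓕closed : ∀ ψ : ↥S → X, Continuous ψ → (∃ C : ℝ, ∀ t : ↥S, ‖ψ t‖ ≤ C * w ↑t) →
      (∀ ε > 0, ∃ χ ∈ 𝓕, ∀ t : ↥S, ‖ψ t - χ t‖ ≤ ε * w ↑t) → ψ ∈ 𝓕)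
    (φ : ↥S → X) (hφc : Continuous φ) (Cφ : ℝ) (hφb : ∀ t : ↥S, ‖φ t‖ ≤ Cφ * w ↑t)
    (p : ↥S → X) (hpc : Continuous p)
    (m : ℕ) (hp_poly : ∀ v t : ↥S, (fdiff v)^[m + 1] p t = 0)
    (Cp : ℝ) (hpb : ∀ t : ↥S, ‖p t‖ ≤ Cp * w ↑t)
    (hmean : MaakMean (fun t : ↥S => (w ↑t)⁻¹ • (φ t - p t)) (0 : X))
    (hdiff : ∀ t : ↥S, fdiff t φ ∈ 𝓕) :
    (∀ ε > 0, ∃ ψ ∈ 𝓕, ∃ ξ : ↥S → X, Continuous ξ ∧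
        (∀ δ > 0, IsCompact {t : ↥S | δ ≤ ‖ξ t‖ / w ↑t}) ∧
        ∀ t : ↥S, ‖(φ t - p t) - (ψ t + ξ t)‖ ≤ ε * w ↑t) ∧
      ((∀ t : G, w t = 1) → φ - p ∈ 𝓕) := by
  let V : Submodule ℂ (S → X) :=
    { carrier := 𝓕, add_mem' := fun ha hb => h𝓕add _ ha _ hb, zero_mem' := h𝓕zero,
      smul_mem' := h𝓕smul }
  let wS : S → ℝ := fun t => w t
  have hwS (t : S) : 0 < wS t := hw.pos t
  have hφO : φ =O[⊤] wS := .of_bound Cφ <| .of_forall fun t => by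
    simpa [abs_of_pos (hwS t)] using hφb t
  have hpO : p =O[⊤] wS := .of_bound Cp <| .of_forall fun t => by
    simpa [abs_of_pos (hwS t)] using hpb t
  have hp (u : S) : (fdiff u)^[m + 1] p = 0 := funext (hp_poly u)
  have happrox : ∀ ε > 0, ∃ F : Finset S, ∃ ψ ∈ 𝓕,
      ∀ t, ‖(φ t - p t) - (ψ t + maakCorrection wS φ p F t)‖ ≤ ε * w t := by
    intro ε hε
    obtain ⟨F, hF⟩ := hmean.exists_norm_sub_sub_maakCorrection_le hwS hε
    refine ⟨F, _, ?_, hF⟩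
    show _ ∈ V
    convert V.smul_mem ((-(F.card : ℝ)⁻¹ : ℝ) : ℂ) (V.sum_mem fun u (_ : u ∈ F) => hdiff u) using 1
    ext t
    simp only [Pi.smul_apply, Finset.sum_apply, Complex.coe_smul, neg_smul]
  refine ⟨fun ε hε => ?_, fun hw1 => ?_⟩
  · obtain ⟨F, ψ, hψ, hbound⟩ := happrox ε hε
    have hwSc : Continuous wS := hw.1.comp continuous_subtype_val
    have hξc := continuous_maakCorrection hwSc (fun t => (hwS t).ne') hφc hpc F
    have hξo : maakCorrection wS φ p F =o[cocompact S] wS :=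
      isLittleO_maakCorrection (fun t => (hwS t).ne')
        (fun u _ => hw.isLittleO_fdiff_of_iterate_fdiff_eq_zero hScl m hp hpO u)
        (fun u _ => hw.isLittleO_fdiff_subtype hScl u) (hφO.sub hpO)
    exact ⟨ψ, hψ, _, hξc,
      fun δ hδ => hξo.isCompact_setOf_le_norm_div hξc hwSc (fun t => (hwS t).ne') hδ, hbound⟩
  · have hfb (t : S) : ‖(φ - p) t‖ ≤ (Cφ + Cp) * w t :=
      (norm_sub_le _ _).trans (by rw [add_mul]; exact add_le_add (hφb t) (hpb t))
    refine h𝓕closed _ (hφc.sub hpc) ⟨Cφ + Cp, hfb⟩ fun ε hε => ?_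
    obtain ⟨F, ψ, hψ, hbound⟩ := happrox ε hε
    have hwS1 : wS = fun _ => 1 := funext fun t => hw1 t
    have hξ : maakCorrection wS φ p F = 0 := maakCorrection_eq_zero
      (fun u _ => fdiff_eq_zero_of_iterate_fdiff_eq_zero (hp u) (hwS1 ▸ hpO))
      (fun u _ => by rw [hwS1]; exact funext fun t => sub_self 1)
    exact ⟨ψ, hψ, fun t => by simpa [hξ] using hbound t⟩

/-- Theorem 4.12: if `𝓕` is a translation invariant closed subspace of
`BC_w(J,X)`, `φ ∈ BC_w(J,X)` is `w`-ergodic with `w`-mean the polynomial `p`, and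
`Δ_tφ ∈ 𝓕` for all `t ∈ J`, then `φ - p` lies in the closure of `𝓕 + C_{w,0}(J,X)`;
and if `w ≡ 1`, then `φ - p ∈ 𝓕`. Here `J` is realized as a closed submonoid `S`. -/
theorem difference_theorem
    {G : Type*} [AddCommGroup G] [TopologicalSpace G] [IsTopologicalAddGroup G]
    [LocallyCompactSpace G] [T2Space G]
    {X : Type*} [NormedAddCommGroup X] [NormedSpace ℂ X] [CompleteSpace X]
    (w : G → ℝ) (hw : IsStdWeight w)
    (S : AddSubmonoid G) (hScl : IsClosed (S : Set G))
    (hSint : (interior (S : Set G)).Nonempty)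
    (hSgen : ∀ g : G, ∃ u ∈ S, ∃ v ∈ S, g = u - v)
    (𝓕 : Set (↥S → X))
    (h𝓕sub : ∀ ψ ∈ 𝓕, Continuous ψ ∧ ∃ C : ℝ, ∀ t : ↥S, ‖ψ t‖ ≤ C * w ↑t)
    (h𝓕zero : (0 : ↥S → X) ∈ 𝓕)
    (h𝓕add : ∀ ψ ∈ 𝓕, ∀ χ ∈ 𝓕, ψ + χ ∈ 𝓕)
    (h𝓕smul : ∀ c : ℂ, ∀ ψ ∈ 𝓕, c • ψ ∈ 𝓕)
    (h𝓕trans : ∀ ψ ∈ 𝓕, ∀ t : ↥S, (fun s => ψ (s + t)) ∈ 𝓕)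
    (h𝓕closed : ∀ ψ : ↥S → X, Continuous ψ → (∃ C : ℝ, ∀ t : ↥S, ‖ψ t‖ ≤ C * w ↑t) →
      (∀ ε > 0, ∃ χ ∈ 𝓕, ∀ t : ↥S, ‖ψ t - χ t‖ ≤ ε * w ↑t) → ψ ∈ 𝓕)
    (φ : ↥S → X) (hφc : Continuous φ) (Cφ : ℝ) (hφb : ∀ t : ↥S, ‖φ t‖ ≤ Cφ * w ↑t)
    (p : ↥S → X) (hpc : Continuous p)
    (m : ℕ) (hp_poly : ∀ v t : ↥S, (fdiff v)^[m + 1] p t = 0)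
    (Cp : ℝ) (hpb : ∀ t : ↥S, ‖p t‖ ≤ Cp * w ↑t)
    (hmean : MaakMean (fun t : ↥S => (w ↑t)⁻¹ • (φ t - p t)) (0 : X))
    (hdiff : ∀ t : ↥S, fdiff t φ ∈ 𝓕) :
    (∀ ε > 0, ∃ ψ ∈ 𝓕, ∃ ξ : ↥S → X, Continuous ξ ∧
        (∀ δ > 0, IsCompact {t : ↥S | δ ≤ ‖ξ t‖ / w ↑t}) ∧
        ∀ t : ↥S, ‖(φ t - p t) - (ψ t + ξ t)‖ ≤ ε * w ↑t) ∧
      ((∀ t : G, w t = 1) → φ - p ∈ 𝓕) :=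
  difference_theorem_general w hw S hScl 𝓕 h𝓕zero h𝓕add h𝓕smul h𝓕closed φ hφc Cφ hφb p hpc m hp_poly
    Cp hpb hmean hdiff
end

section
/- Let X be a complex Banach space and m ≥ 1 an integer. (1) Let w be a standard weight on ℝ such that w(s) ≤ k·w(t) whenever 0 ≤ s ≤ t, for some constant k > 0, let J be ℝ or [0,∞), and let φ : J → X be continuous with sup_{t∈J} ‖φ(t)‖/w(t) < ∞ and with φ/w Maak ergodic with mean 0; then ‖P^mφ(t)‖ / (w(t)·(1+|t|)^m) → 0 as |t| → ∞ in J, where Pφ(t) = ∫₀ᵗ φ(s) ds and P^m is the m-fold iterate of P. (2) Analogously, if w is a standard weight on ℤ with w(s) ≤ k·w(t) whenever 0 ≤ s ≤ t, J is ℤ or ℕ, and φ : J → X satisfies sup_{t∈J} ‖φ(t)‖/w(t) < ∞ with φ/w Maak ergodic with mean 0, then ‖S^mφ(t)‖ / (w(t)·(1+|t|)^m) → 0 as |t| → ∞ in J, where Sφ(n) = Σ_{k=0}^{n−1} φ(k) for n ≥ 1, Sφ(0) = 0, Sφ(−n) = −Σ_{k=−n}^{−1} φ(k) for n ≥ 1,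 and S^m is the m-fold iterate of S. -/
/-- The indefinite integral `Pφ(t) = ∫₀ᵗ φ(s) ds`. -/
noncomputable def intOp {X : Type*} [NormedAddCommGroup X] [NormedSpace ℝ X]
    (f : ℝ → X) : ℝ → X :=
  fun t => ∫ s in (0 : ℝ)..t, f s

/-- The sum function `Sφ(n) = Σ_{k=0}^{n-1} φ(k)` for `n ≥ 1`, `Sφ(0) = 0`,
`Sφ(-n) = -Σ_{k=-n}^{-1} φ(k)` for `n ≥ 1`. -/
def sumOp {X : Type*} [AddCommGroup X] (f : ℤ → X) : ℤ → X := fun n =>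
  if 0 ≤ n then ∑ k ∈ Finset.range n.toNat, f (k : ℤ)
  else -∑ k ∈ Finset.range (-n).toNat, f (n + (k : ℤ))

/-!
Write `ψ = φ / w`. Maak ergodicity gives a finite set `F` whose translate averages
`M_F ψ(s) = |F|⁻¹ ∑_{u ∈ F} ψ(u + s)` (`shiftAvg F ψ s`) are uniformly small; since
`w(s + u) / w(s) → 1`, the averages `M_F φ(s)` are then `o(w(s))`. Averaging
`Pφ(t) = (Pφ(u + t) - Pφ(u)) + Pφ(u) - (Pφ(u + t) - Pφ(t))` over `u ∈ F` writes `Pφ(t)` as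
the primitive of `M_F φ`, which is `o(w(t) |t|)` because `w(s) ≤ k w(t)` for `|s| ≤ |t|`, plus
`O(1)` plus `O(w(t))`. The same quasi-monotonicity shows that the primitive of an
`o(w(t) (1 + |t|)^j)` function is `o(w(t) (1 + |t|)^(j+1))`, and induction on `m` concludes.
Integral and sum are handled at once: the argument only uses their increment bound
`‖Qf(b) - Qf(a)‖ ≤ |b - a| sup_{[a, b]} ‖f‖` and the averaged cocycle identity.
-/

open Set

section Weight

variable {G : Type*}

lemma weight_le_of_abs_le [AddCommGroup G] [LinearOrder G] [IsOrderedAddMonoid G] {w : G → ℝ}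
    (hwe : ∀ t, w (-t) = w t) {k : ℝ} (hmono : ∀ s t : G, 0 ≤ s → s ≤ t → w s ≤ k * w t)
    {a b : G} (h : |a| ≤ |b|) : w a ≤ k * w b := by
  have hw_abs : ∀ x, w |x| = w x := fun x => by
    rcases abs_choice x with hx | hx <;> rw [hx]
    exact hwe x
  simpa only [hw_abs] using hmono |a| |b| (abs_nonneg a) h

lemma exists_abs_weight_add_sub_le [SeminormedAddCommGroup G] {w : G → ℝ} (hw : ∀ t, 0 < w t)
    (hwr : ∀ h : G, ∀ ε > 0, IsCompact {t : G | ε ≤ |(w (t + h) - w t) / w t|})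
    (F : Finset G) {ε : ℝ} (hε : 0 < ε) :
    ∃ R : ℝ, ∀ σ : G, R ≤ ‖σ‖ → ∀ u ∈ F, |w (σ + u) - w σ| ≤ ε * w σ := by
  obtain ⟨R, hR⟩ := (F.isCompact_biUnion fun u _ => hwr u ε hε).isBounded.subset_closedBall 0
  refine ⟨R + 1, fun σ hσ u hu => ?_⟩
  have hσu : ¬ ε ≤ |(w (σ + u) - w σ) / w σ| := fun h => by
    have := mem_closedBall_zero_iff.mp (hR (mem_biUnion hu h))
    linarith
  rw [not_le, abs_div, abs_of_pos (hw σ), div_lt_iff₀ (hw σ)] at hσu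
  exact hσu.le

end Weight

section Average

variable {ι G X : Type*} [NormedAddCommGroup X] [NormedSpace ℝ X]

lemma norm_inv_card_smul_sum_le {F : Finset ι} (hF : F.Nonempty) {f : ι → X} {B : ℝ}
    (h : ∀ u ∈ F, ‖f u‖ ≤ B) : ‖(F.card : ℝ)⁻¹ • ∑ u ∈ F, f u‖ ≤ B := by
  have hcard : (0 : ℝ) < F.card := by exact_mod_cast hF.card_pos
  rw [norm_smul, norm_inv, Real.norm_natCast, inv_mul_le_iff₀ hcard]
  calc ‖∑ u ∈ F, f u‖ ≤ ∑ u ∈ F, ‖f u‖ := norm_sum_le _ _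
    _ ≤ F.card * B := by simpa using Finset.sum_le_card_nsmul F _ B h

noncomputable def shiftAvg [Add G] (F : Finset G) (f : G → X) (s : G) : X :=
  (F.card : ℝ)⁻¹ • ∑ u ∈ F, f (u + s)

variable [AddCommGroup G] {F : Finset G} {w : G → ℝ} {φ : G → X} {C : ℝ}

lemma norm_shiftAvg_le (hF : F.Nonempty) (hwsub : ∀ s t, w (s + t) ≤ w s * w t) {W : ℝ}
    (hW : ∀ u ∈ F, w u ≤ W) (hC : 0 ≤ C) (hw : ∀ t, 0 ≤ w t) {σ : G}
    (hφ : ∀ u ∈ F, ‖φ (u + σ)‖ ≤ C * w (u + σ)) : ‖shiftAvg F φ σ‖ ≤ C * W * w σ :=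
  norm_inv_card_smul_sum_le hF fun u hu => calc
    ‖φ (u + σ)‖ ≤ C * (w u * w σ) := (hφ u hu).trans (by gcongr; exact hwsub u σ)
    _ ≤ C * W * w σ := by
      rw [mul_assoc]
      exact mul_le_mul_of_nonneg_left (mul_le_mul_of_nonneg_right (hW u hu) (hw σ)) hC

lemma norm_shiftAvg_le_of_maak (hF : F.Nonempty) (hw : ∀ t, 0 < w t) {σ : G} {δ : ℝ}
    (hφ : ∀ u ∈ F, ‖φ (u + σ)‖ ≤ C * w (u + σ))
    (hw_near : ∀ u ∈ F, |w (u + σ) - w σ| ≤ δ * w σ)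
    (havg : ‖shiftAvg F (fun t => (w t)⁻¹ • φ t) σ‖ ≤ δ) :
    ‖shiftAvg F φ σ‖ ≤ δ * (1 + C) * w σ := by
  have hsplit : shiftAvg F φ σ = w σ • shiftAvg F (fun t => (w t)⁻¹ • φ t) σ +
      (F.card : ℝ)⁻¹ • ∑ u ∈ F, (w (u + σ) - w σ) • ((w (u + σ))⁻¹ • φ (u + σ)) := by
    rw [shiftAvg, shiftAvg, smul_comm, ← smul_add, Finset.smul_sum (r := w σ),
      ← Finset.sum_add_distrib]
    congr 1
    refine Finset.sum_congr rfl fun u _ => ?_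
    rw [← add_smul, add_sub_cancel, smul_inv_smul₀ (hw _).ne']
  have hψ : ∀ u ∈ F, ‖(w (u + σ))⁻¹ • φ (u + σ)‖ ≤ C := fun u hu => by
    rw [norm_smul, norm_inv, Real.norm_of_nonneg (hw _).le, inv_mul_le_iff₀ (hw _), mul_comm]
    exact hφ u hu
  have hδ : 0 ≤ δ := (norm_nonneg _).trans havg
  have herr : ‖(F.card : ℝ)⁻¹ • ∑ u ∈ F, (w (u + σ) - w σ) • ((w (u + σ))⁻¹ • φ (u + σ))‖
      ≤ δ * w σ * C := norm_inv_card_smul_sum_le hF fun u hu => by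
    rw [norm_smul, Real.norm_eq_abs]
    exact mul_le_mul (hw_near u hu) (hψ u hu) (norm_nonneg _) (by positivity [(hw σ).le])
  calc ‖shiftAvg F φ σ‖ ≤ w σ * δ + δ * w σ * C := by
        rw [hsplit]
        refine (norm_add_le _ _).trans (add_le_add ?_ herr)
        rw [norm_smul, Real.norm_of_nonneg (hw σ).le]
        exact mul_le_mul_of_nonneg_left havg (hw σ).le
    _ = δ * (1 + C) * w σ := by ring

lemma continuousOn_shiftAvg [TopologicalSpace G] [ContinuousAdd G] {J : Set G}
    (hJadd : ∀ a ∈ J, ∀ b ∈ J, a + b ∈ J) (hφ : ContinuousOn φ J) (hFJ : ↑F ⊆ J) :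
    ContinuousOn (shiftAvg F φ) J :=
  (continuousOn_finsetSum F fun u hu =>
    hφ.comp (continuous_const_add u).continuousOn fun _ hs => hJadd _ (hFJ hu) _ hs).const_smul _

end Average

section Order

variable {G : Type*} [AddCommGroup G] [LinearOrder G] [IsOrderedAddMonoid G]

lemma abs_le_abs_of_mem_uIcc_zero {x t : G} (hx : x ∈ uIcc 0 t) : |x| ≤ |t| := by
  simpa using abs_sub_left_of_mem_uIcc hx

lemma exists_mem_uIcc_split {r t : G} (hr : 0 ≤ r) (hrt : r ≤ |t|) :
    ∃ t₀ ∈ uIcc 0 t, |t₀| = r ∧ |t - t₀| ≤ |t| ∧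
      (∀ x ∈ uIcc 0 t₀, |x| ≤ r) ∧ ∀ x ∈ uIcc t₀ t, r ≤ |x| := by
  rcases le_total 0 t with ht | ht
  · rw [abs_of_nonneg ht] at hrt
    refine ⟨r, ?_, abs_of_nonneg hr, ?_, fun x hx => ?_, fun x hx => ?_⟩
    · rw [uIcc_of_le ht]; exact ⟨hr, hrt⟩
    · rw [abs_of_nonneg (sub_nonneg.2 hrt), abs_of_nonneg ht]; grind
    · rw [uIcc_of_le hr] at hx; rw [abs_of_nonneg hx.1]; exact hx.2
    · rw [uIcc_of_le hrt] at hx; exact hx.1.trans (le_abs_self x)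
  · rw [abs_of_nonpos ht] at hrt
    refine ⟨-r, ?_, by rw [abs_neg, abs_of_nonneg hr], ?_, fun x hx => ?_, fun x hx => ?_⟩
    · rw [uIcc_of_ge ht]; exact ⟨by grind, by grind⟩
    · rw [abs_of_nonpos (by grind : t - -r ≤ 0), abs_of_nonpos ht]; grind
    · rw [uIcc_of_ge (by grind : -r ≤ 0)] at hx; rw [abs_le]; grind
    · rw [uIcc_of_ge (by grind : t ≤ -r)] at hx
      exact (by grind : r ≤ -x).trans (neg_le_abs x)

end Order

section SolidNorm

variable {G : Type*} [NormedAddCommGroup G] [LinearOrder G] [IsOrderedAddMonoid G]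
  [HasSolidNorm G]

/-- Turns a threshold on `‖x‖` into one on `|x|`; if `‖·‖` stays below `R` the hypothesis on `x`
is never met. -/
lemma exists_abs_threshold (R : ℝ) :
    ∃ r : G, 0 ≤ r ∧ ∀ x : G, max R (‖r‖ + 1) ≤ ‖x‖ → r ≤ |x| ∧ R ≤ ‖r‖ := by
  by_cases hR : ∃ t : G, R ≤ ‖t‖
  · obtain ⟨t, ht⟩ := hR
    refine ⟨|t|, abs_nonneg t, fun x hx => ⟨?_, by rwa [norm_abs_eq_norm]⟩⟩
    by_contra! hxt
    have := norm_le_norm_of_abs_le_abs (by rw [abs_abs]; exact hxt.le : |x| ≤ |(|t|)|)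
    linarith [le_max_right R (‖|t|‖ + 1)]
  · push Not at hR
    exact ⟨0, le_rfl, fun x hx => absurd (le_of_max_le_left hx) (hR x).not_ge⟩

end SolidNorm

lemma add_mul_le_mul_one_add {K ε s V : ℝ} (hε : 0 < ε) (hV : 0 ≤ V) (hs : 2 * K / ε ≤ s) :
    K * V + ε / 2 * s * V ≤ ε * (V * (1 + s)) := by
  rw [div_le_iff₀ hε] at hs
  nlinarith

section Primitive

variable {G X : Type*} [NormedAddCommGroup G] [LinearOrder G] [NormedAddCommGroup X]
  [NormedSpace ℝ X]

def IsLittleOAtInftyOn (J : Set G) (f : G → X) (v : G → ℝ) : Prop :=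
  ∀ ε > 0, ∃ R : ℝ, ∀ t ∈ J, R ≤ ‖t‖ → ‖f t‖ ≤ ε * v t

def BddOnAbsLe (J : Set G) (f : G → X) : Prop :=
  ∀ r : G, ∃ B : ℝ, ∀ x ∈ J, |x| ≤ r → ‖f x‖ ≤ B

/-- `Q` behaves like the primitive `Qf(t) = ∫₀ᵗ f` on the class `P` of functions (the continuous
ones for the integral, all of them for the sum `S`). -/
structure IsPrimitiveOn (Q : (G → X) → G → X) (J : Set G) (P : (G → X) → Prop) : Prop where
  apply_zero (f : G → X) : Q f 0 = 0
  norm_sub_le {f : G → X} (hf : P f) {a b : G} (ha : a ∈ J) (hb : b ∈ J) {K : ℝ}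
    (hK : ∀ x ∈ uIcc a b, ‖f x‖ ≤ K) : ‖Q f b - Q f a‖ ≤ K * ‖b - a‖
  avg_sub {f : G → X} (hf : P f) {F : Finset G} (hF : ↑F ⊆ J) {t : G} (ht : t ∈ J) :
    (F.card : ℝ)⁻¹ • ∑ u ∈ F, (Q f (u + t) - Q f u) = Q (shiftAvg F f) t
  prop_shiftAvg {f : G → X} (hf : P f) {F : Finset G} (hF : ↑F ⊆ J) : P (shiftAvg F f)
  prop_apply {f : G → X} (hf : P f) : P (Q f)

namespace IsPrimitiveOn

variable {Q : (G → X) → G → X} {J : Set G} {P : (G → X) → Prop}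

lemma norm_apply_le (hQ : IsPrimitiveOn Q J P) (h0 : (0 : G) ∈ J) {f : G → X} (hf : P f)
    {t : G} (ht : t ∈ J) {K : ℝ} (hK : ∀ x ∈ uIcc 0 t, ‖f x‖ ≤ K) : ‖Q f t‖ ≤ K * ‖t‖ := by
  simpa [hQ.apply_zero] using hQ.norm_sub_le hf h0 ht hK

lemma apply_eq_add_sub (hQ : IsPrimitiveOn Q J P) {f : G → X} (hf : P f) {F : Finset G}
    (hF : F.Nonempty) (hFJ : ↑F ⊆ J) {t : G} (ht : t ∈ J) :
    Q f t = Q (shiftAvg F f) t + (F.card : ℝ)⁻¹ • ∑ u ∈ F, Q f u -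
      (F.card : ℝ)⁻¹ • ∑ u ∈ F, (Q f (u + t) - Q f t) := by
  have hcard : (F.card : ℝ) ≠ 0 := by exact_mod_cast hF.card_pos.ne'
  rw [← hQ.avg_sub hf hFJ ht]
  simp only [Finset.sum_sub_distrib, smul_sub, Finset.sum_const, ← Nat.cast_smul_eq_nsmul ℝ,
    smul_smul, inv_mul_cancel₀ hcard, one_smul]
  abel

variable {w : G → ℝ} {k C : ℝ} {φ : G → X} [IsOrderedAddMonoid G] [hJ : J.OrdConnected]

lemma norm_apply_add_sub_le (hQ : IsPrimitiveOn Q J P) (hw : ∀ t, 0 ≤ w t)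
    (hwsub : ∀ s t, w (s + t) ≤ w s * w t) (hmono : ∀ a b : G, |a| ≤ |b| → w a ≤ k * w b)
    (hφ : P φ) (hC : 0 ≤ C) (hφC : ∀ x ∈ J, ‖φ x‖ ≤ C * w x) {u t : G} (ht : t ∈ J)
    (hut : u + t ∈ J) : ‖Q φ (u + t) - Q φ t‖ ≤ C * k * w u * ‖u‖ * w t := by
  have hK : ∀ x ∈ uIcc t (u + t), ‖φ x‖ ≤ C * k * w u * w t := fun x hx => calc
    ‖φ x‖ ≤ C * w (x - t + t) := by
      rw [sub_add_cancel]
      exact hφC x (hJ.uIcc_subset ht hut hx)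
    _ ≤ C * ((k * w u) * w t) := by
      have hxu : w (x - t) ≤ k * w u := hmono _ _ (by simpa using abs_sub_left_of_mem_uIcc hx)
      exact mul_le_mul_of_nonneg_left
        ((hwsub _ _).trans (mul_le_mul_of_nonneg_right hxu (hw t))) hC
    _ = C * k * w u * w t := by ring
  calc ‖Q φ (u + t) - Q φ t‖ ≤ C * k * w u * w t * ‖u + t - t‖ := hQ.norm_sub_le hφ ht hut hK
    _ = C * k * w u * ‖u‖ * w t := by rw [add_sub_cancel_right]; ring

variable [HasSolidNorm G]

lemma norm_apply_le_add (hQ : IsPrimitiveOn Q J P) (h0 : (0 : G) ∈ J) {f : G → X} (hf : P f)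
    {r t : G} (hr : 0 ≤ r) (ht : t ∈ J) (hrt : r ≤ |t|) {B D : ℝ}
    (hsmall : ∀ x ∈ uIcc 0 t, |x| ≤ r → ‖f x‖ ≤ B)
    (hlarge : ∀ x ∈ uIcc 0 t, r ≤ |x| → ‖f x‖ ≤ D) :
    ‖Q f t‖ ≤ B * ‖r‖ + D * ‖t‖ := by
  obtain ⟨t₀, ht₀, ht₀r, htt₀, hin, hout⟩ := exists_mem_uIcc_split hr hrt
  have hin_sub : uIcc 0 t₀ ⊆ uIcc 0 t := uIcc_subset_uIcc left_mem_uIcc ht₀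
  have hout_sub : uIcc t₀ t ⊆ uIcc 0 t := uIcc_subset_uIcc ht₀ right_mem_uIcc
  have hD : 0 ≤ D := (norm_nonneg _).trans (hlarge t right_mem_uIcc hrt)
  have ht₀J : t₀ ∈ J := hJ.uIcc_subset h0 ht ht₀
  have h₁ := hQ.norm_apply_le h0 hf ht₀J fun x hx => hsmall x (hin_sub hx) (hin x hx)
  have h₂ := hQ.norm_sub_le hf ht₀J ht fun x hx => hlarge x (hout_sub hx) (hout x hx)
  calc ‖Q f t‖ = ‖Q f t₀ + (Q f t - Q f t₀)‖ := by rw [add_sub_cancel]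
    _ ≤ B * ‖t₀‖ + D * ‖t - t₀‖ := (norm_add_le _ _).trans (add_le_add h₁ h₂)
    _ ≤ B * ‖r‖ + D * ‖t‖ := by
      rw [← norm_abs_eq_norm t₀, ht₀r]
      gcongr
      exact norm_le_norm_of_abs_le_abs htt₀

lemma bddOnAbsLe_apply (hQ : IsPrimitiveOn Q J P) (h0 : (0 : G) ∈ J) {f : G → X} (hf : P f)
    (hfb : BddOnAbsLe J f) : BddOnAbsLe J (Q f) := by
  intro r
  obtain ⟨B, hB⟩ := hfb r
  refine ⟨B * ‖r‖, fun x hx hxr => ?_⟩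
  have hBx : ∀ y ∈ uIcc 0 x, ‖f y‖ ≤ B := fun y hy =>
    hB y (hJ.uIcc_subset h0 hx hy) ((abs_le_abs_of_mem_uIcc_zero hy).trans hxr)
  refine (hQ.norm_apply_le h0 hf hx hBx).trans (mul_le_mul_of_nonneg_left ?_ ?_)
  · exact norm_le_norm_of_abs_le_abs (hxr.trans (le_abs_self r))
  · exact (norm_nonneg _).trans (hBx 0 left_mem_uIcc)

lemma norm_apply_shiftAvg_le (hQ : IsPrimitiveOn Q J P) (h0 : (0 : G) ∈ J)
    (hJadd : ∀ a ∈ J, ∀ b ∈ J, a + b ∈ J) (hw : ∀ t, 0 < w t)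
    (hwsub : ∀ s t, w (s + t) ≤ w s * w t) (hmono : ∀ a b : G, |a| ≤ |b| → w a ≤ k * w b)
    (hφ : P φ) (hC : 0 ≤ C) (hφC : ∀ x ∈ J, ‖φ x‖ ≤ C * w x) {F : Finset G}
    (hF : F.Nonempty) (hFJ : ↑F ⊆ J) {δ R₀ : ℝ}
    (hR₀ : ∀ σ : G, R₀ ≤ ‖σ‖ → ∀ u ∈ F, |w (σ + u) - w σ| ≤ δ * w σ)
    (havg : ∀ s ∈ J, ‖shiftAvg F (fun t => (w t)⁻¹ • φ t) s‖ ≤ δ) {r t : G} (hr : 0 ≤ r)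
    (hrR : R₀ ≤ ‖r‖) (ht : t ∈ J) (hrt : r ≤ |t|) :
    ‖Q (shiftAvg F φ) t‖ ≤
      C * F.sup' hF w * (k * w r) * ‖r‖ + δ * (1 + C) * k * (‖t‖ * w t) := by
  set W := F.sup' hF w
  have hW : 0 ≤ W := by
    obtain ⟨u, hu⟩ := hF
    exact (hw u).le.trans (F.le_sup' w hu)
  have hφF : ∀ x ∈ J, ∀ u ∈ F, ‖φ (u + x)‖ ≤ C * w (u + x) := fun x hx u hu =>
    hφC _ (hJadd _ (hFJ hu) _ hx)
  have hxJ : ∀ x ∈ uIcc 0 t, x ∈ J := fun x hx => hJ.uIcc_subset h0 ht hx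
  have hsmall : ∀ x ∈ uIcc 0 t, |x| ≤ r → ‖shiftAvg F φ x‖ ≤ C * W * (k * w r) :=
    fun x hx hxr => (norm_shiftAvg_le hF hwsub (fun u hu => F.le_sup' w hu) hC
        (fun t => (hw t).le) (hφF x (hxJ x hx))).trans
      (mul_le_mul_of_nonneg_left (hmono x r (hxr.trans (le_abs_self r))) (mul_nonneg hC hW))
  have hlarge : ∀ x ∈ uIcc 0 t, r ≤ |x| → ‖shiftAvg F φ x‖ ≤ δ * (1 + C) * (k * w t) := by
    intro x hx hxr
    have hδ : 0 ≤ δ := (norm_nonneg _).trans (havg x (hxJ x hx))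
    have hRx : R₀ ≤ ‖x‖ := hrR.trans (norm_le_norm_of_abs_le_abs (by rwa [abs_of_nonneg hr]))
    refine (norm_shiftAvg_le_of_maak hF hw (hφF x (hxJ x hx)) (fun u hu => ?_)
      (havg x (hxJ x hx))).trans
      (mul_le_mul_of_nonneg_left (hmono x t (abs_le_abs_of_mem_uIcc_zero hx)) ?_)
    · rw [add_comm u]
      exact hR₀ x hRx u hu
    · exact mul_nonneg hδ (by linarith)
  exact (hQ.norm_apply_le_add h0 (hQ.prop_shiftAvg hφ hFJ) hr ht hrt hsmall hlarge).trans_eq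
    (by ring)

theorem isLittleOAtInftyOn_apply (hQ : IsPrimitiveOn Q J P) (h0 : (0 : G) ∈ J)
    (hJadd : ∀ a ∈ J, ∀ b ∈ J, a + b ∈ J) (hw1 : ∀ t, 1 ≤ w t)
    (hwsub : ∀ s t, w (s + t) ≤ w s * w t)
    (hwr : ∀ h : G, ∀ ε > 0, IsCompact {t : G | ε ≤ |(w (t + h) - w t) / w t|})
    (hmono : ∀ a b : G, |a| ≤ |b| → w a ≤ k * w b) (hφ : P φ) (hφC : ∀ x ∈ J, ‖φ x‖ ≤ C * w x)
    (hM : MaakOn J (fun t => (w t)⁻¹ • φ t) 0) :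
    IsLittleOAtInftyOn J (Q φ) fun t => w t * (1 + ‖t‖) := by
  intro ε hε
  have hw : ∀ t, 0 < w t := fun t => one_pos.trans_le (hw1 t)
  have hk : 0 < k := pos_of_mul_pos_left ((hw 0).trans_le (hmono 0 0 le_rfl)) (hw 0).le
  have hC : 0 ≤ C := nonneg_of_mul_nonneg_left ((norm_nonneg _).trans (hφC 0 h0)) (hw 0)
  set δ := ε / (2 * k * (1 + C))
  have hδ : 0 < δ := by positivity
  obtain ⟨F, hF, hFJ, havg⟩ := hM δ hδ
  obtain ⟨R₀, hR₀⟩ := exists_abs_weight_add_sub_le hw hwr F hδ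
  obtain ⟨r, hr, hrR⟩ := exists_abs_threshold (G := G) R₀
  set K := C * F.sup' hF w * (k * w r) * ‖r‖ + F.sup' hF (fun u => ‖Q φ u‖) +
    F.sup' hF fun u => C * k * w u * ‖u‖
  refine ⟨max (max R₀ (‖r‖ + 1)) (2 * K / ε), fun t ht hRt => ?_⟩
  obtain ⟨hrt, hrR₀⟩ := hrR t (le_of_max_le_left hRt)
  have hA := hQ.norm_apply_shiftAvg_le h0 hJadd hw hwsub hmono hφ hC hφC hF hFJ hR₀
    (fun s hs => by have := havg s hs; rw [sub_zero] at this; exact this.le) hr hrR₀ ht hrt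
  have hB : ‖(F.card : ℝ)⁻¹ • ∑ u ∈ F, Q φ u‖ ≤ F.sup' hF fun u => ‖Q φ u‖ :=
    norm_inv_card_smul_sum_le hF fun u hu => F.le_sup' (fun u => ‖Q φ u‖) hu
  have hD : ‖(F.card : ℝ)⁻¹ • ∑ u ∈ F, (Q φ (u + t) - Q φ t)‖ ≤
      (F.sup' hF fun u => C * k * w u * ‖u‖) * w t :=
    norm_inv_card_smul_sum_le hF fun u hu =>
      (hQ.norm_apply_add_sub_le (fun t => (hw t).le) hwsub hmono hφ hC hφC ht
        (hJadd _ (hFJ hu) _ ht)).trans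
      (mul_le_mul_of_nonneg_right (F.le_sup' (fun u => C * k * w u * ‖u‖) hu) (hw t).le)
  have hK : 0 ≤ C * F.sup' hF w * (k * w r) * ‖r‖ + F.sup' hF (fun u => ‖Q φ u‖) := by
    obtain ⟨u, hu⟩ := hF
    have hW := (hw u).le.trans (F.le_sup' w hu)
    exact add_nonneg (by have := hw r; positivity) ((norm_nonneg _).trans hB)
  have hδk : δ * (1 + C) * k = ε / 2 := by
    simp only [δ]
    field_simp
  calc ‖Q φ t‖ ≤ ‖Q (shiftAvg F φ) t‖ + ‖(F.card : ℝ)⁻¹ • ∑ u ∈ F, Q φ u‖ +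
        ‖(F.card : ℝ)⁻¹ • ∑ u ∈ F, (Q φ (u + t) - Q φ t)‖ := by
        conv_lhs => rw [hQ.apply_eq_add_sub hφ hF hFJ ht]
        exact norm_sub_le_of_le (norm_add_le _ _) le_rfl
    _ ≤ K * w t + ε / 2 * ‖t‖ * w t := by
        rw [hδk] at hA
        nlinarith [mul_le_mul_of_nonneg_left (hw1 t) hK]
    _ ≤ ε * (w t * (1 + ‖t‖)) :=
        add_mul_le_mul_one_add hε (hw t).le (le_of_max_le_right hRt)

theorem isLittleOAtInftyOn_apply_of_isLittleOAtInftyOn (hQ : IsPrimitiveOn Q J P)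
    (h0 : (0 : G) ∈ J) (hw1 : ∀ t, 1 ≤ w t) (hmono : ∀ a b : G, |a| ≤ |b| → w a ≤ k * w b)
    {g : G → X} (hg : P g) (hgb : BddOnAbsLe J g) {j : ℕ}
    (hgs : IsLittleOAtInftyOn J g fun t => w t * (1 + ‖t‖) ^ j) :
    IsLittleOAtInftyOn J (Q g) fun t => w t * (1 + ‖t‖) ^ (j + 1) := by
  intro ε hε
  have hw : ∀ t, 0 < w t := fun t => one_pos.trans_le (hw1 t)
  have hk : 0 < k := pos_of_mul_pos_left ((hw 0).trans_le (hmono 0 0 le_rfl)) (hw 0).le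
  obtain ⟨R, hR⟩ := hgs (ε / (2 * k)) (by positivity)
  obtain ⟨r, hr, hrR⟩ := exists_abs_threshold (G := G) R
  obtain ⟨B, hB⟩ := hgb r
  have hB0 : 0 ≤ B := (norm_nonneg _).trans (hB 0 h0 (by simpa using hr))
  refine ⟨max (max R (‖r‖ + 1)) (2 * (B * ‖r‖) / ε), fun t ht hRt => ?_⟩
  obtain ⟨hrt, hRr⟩ := hrR t (le_of_max_le_left hRt)
  have hlarge : ∀ x ∈ uIcc 0 t, r ≤ |x| → ‖g x‖ ≤ ε / 2 * (w t * (1 + ‖t‖) ^ j) := by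
    intro x hx hxr
    have hxt := abs_le_abs_of_mem_uIcc_zero hx
    calc ‖g x‖ ≤ ε / (2 * k) * (w x * (1 + ‖x‖) ^ j) :=
          hR x (hJ.uIcc_subset h0 ht hx)
            (hRr.trans (norm_le_norm_of_abs_le_abs (by rwa [abs_of_nonneg hr])))
      _ ≤ ε / (2 * k) * ((k * w t) * (1 + ‖t‖) ^ j) := by
          have hpow : (1 + ‖x‖) ^ j ≤ (1 + ‖t‖) ^ j :=
            pow_le_pow_left₀ (by positivity) (by linarith [norm_le_norm_of_abs_le_abs hxt]) j
          have hwt := hw t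
          exact mul_le_mul_of_nonneg_left
            (mul_le_mul (hmono x t hxt) hpow (by positivity) (by positivity)) (by positivity)
      _ = ε / 2 * (w t * (1 + ‖t‖) ^ j) := by field_simp
  have h := hQ.norm_apply_le_add h0 hg hr ht hrt
    (fun x hx hxr => hB x (hJ.uIcc_subset h0 ht hx) hxr) hlarge
  have hV : 1 ≤ w t * (1 + ‖t‖) ^ j :=
    one_le_mul_of_one_le_of_one_le (hw1 t) (one_le_pow₀ (by linarith [norm_nonneg t]))
  calc ‖Q g t‖
      ≤ B * ‖r‖ * (w t * (1 + ‖t‖) ^ j) + ε / 2 * ‖t‖ * (w t * (1 + ‖t‖) ^ j) := by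
        nlinarith [mul_le_mul_of_nonneg_left hV (mul_nonneg hB0 (norm_nonneg r))]
    _ ≤ ε * (w t * (1 + ‖t‖) ^ j * (1 + ‖t‖)) :=
        add_mul_le_mul_one_add hε (by positivity) (le_of_max_le_right hRt)
    _ = ε * (w t * (1 + ‖t‖) ^ (j + 1)) := by ring

theorem isLittleOAtInftyOn_iterate (hQ : IsPrimitiveOn Q J P) (h0 : (0 : G) ∈ J)
    (hJadd : ∀ a ∈ J, ∀ b ∈ J, a + b ∈ J) (hw1 : ∀ t, 1 ≤ w t)
    (hwsub : ∀ s t, w (s + t) ≤ w s * w t)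
    (hwr : ∀ h : G, ∀ ε > 0, IsCompact {t : G | ε ≤ |(w (t + h) - w t) / w t|})
    (hmono : ∀ a b : G, |a| ≤ |b| → w a ≤ k * w b) (hφ : P φ) (hφC : ∀ x ∈ J, ‖φ x‖ ≤ C * w x)
    (hM : MaakOn J (fun t => (w t)⁻¹ • φ t) 0) (j : ℕ) :
    IsLittleOAtInftyOn J (Q^[j + 1] φ) fun t => w t * (1 + ‖t‖) ^ (j + 1) := by
  have hC : 0 ≤ C :=
    nonneg_of_mul_nonneg_left ((norm_nonneg _).trans (hφC 0 h0)) (one_pos.trans_le (hw1 0))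
  have hφb : BddOnAbsLe J φ := fun r => ⟨C * (k * w r), fun x hx hxr =>
    (hφC x hx).trans (mul_le_mul_of_nonneg_left (hmono x r (hxr.trans (le_abs_self r))) hC)⟩
  suffices P (Q^[j + 1] φ) ∧ BddOnAbsLe J (Q^[j + 1] φ) ∧
      IsLittleOAtInftyOn J (Q^[j + 1] φ) fun t => w t * (1 + ‖t‖) ^ (j + 1) from this.2.2
  induction j with
  | zero =>
    simpa using ⟨hQ.prop_apply hφ, hQ.bddOnAbsLe_apply h0 hφ hφb,
      hQ.isLittleOAtInftyOn_apply h0 hJadd hw1 hwsub hwr hmono hφ hφC hM⟩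
  | succ j ih =>
    obtain ⟨hg, hgb, hgs⟩ := ih
    rw [Function.iterate_succ_apply']
    exact ⟨hQ.prop_apply hg, hQ.bddOnAbsLe_apply h0 hg hgb,
      hQ.isLittleOAtInftyOn_apply_of_isLittleOAtInftyOn h0 hw1 hmono hg hgb hgs⟩

theorem isLittleOAtInftyOn_iterate_of_isStdWeight (hQ : IsPrimitiveOn Q J P) (h0 : (0 : G) ∈ J)
    (hJadd : ∀ a ∈ J, ∀ b ∈ J, a + b ∈ J) {w : G → ℝ} (hw : IsStdWeight w) {k : ℝ}
    (hmono : ∀ s t : G, 0 ≤ s → s ≤ t → w s ≤ k * w t) {φ : G → X} (hφ : P φ)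
    (hφC : ∃ C : ℝ, ∀ t ∈ J, ‖φ t‖ ≤ C * w t) (hM : MaakOn J (fun t => (w t)⁻¹ • φ t) 0)
    {m : ℕ} (hm : 1 ≤ m) : IsLittleOAtInftyOn J (Q^[m] φ) fun t => w t * (1 + ‖t‖) ^ m := by
  obtain ⟨-, hw1, hwsub, hwe, -, -, hwr, -⟩ := hw
  obtain ⟨C, hφC⟩ := hφC
  obtain ⟨j, rfl⟩ : ∃ j, m = j + 1 := ⟨m - 1, by omega⟩
  exact hQ.isLittleOAtInftyOn_iterate h0 hJadd hw1 hwsub hwr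
    (fun _ _ => weight_le_of_abs_le hwe hmono) hφ hφC hM j

end IsPrimitiveOn

end Primitive

lemma ordConnected_zero_mem_add_mem {G : Type*} [AddCommGroup G] [LinearOrder G]
    [IsOrderedAddMonoid G] {J : Set G} (hJ : J = univ ∨ J = Ici 0) :
    J.OrdConnected ∧ (0 : G) ∈ J ∧ ∀ a ∈ J, ∀ b ∈ J, a + b ∈ J := by
  rcases hJ with rfl | rfl
  · exact ⟨ordConnected_univ, trivial, fun _ _ _ _ => trivial⟩
  · exact ⟨ordConnected_Ici, self_mem_Ici, fun _ ha _ hb => add_nonneg ha hb⟩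

section Sum

variable {X : Type*}

section AddCommGroup

variable [AddCommGroup X] (f : ℤ → X)

lemma sumOp_of_nonpos {n : ℤ} (hn : n ≤ 0) :
    sumOp f n = -∑ k ∈ Finset.range (-n).toNat, f (n + k) := by
  rcases hn.lt_or_eq with hn | rfl
  · simp [sumOp, hn.not_ge]
  · simp [sumOp]

lemma sumOp_add_one (n : ℤ) : sumOp f (n + 1) = sumOp f n + f n := by
  rcases le_or_gt 0 n with hn | hn
  · have hsucc : (n + 1).toNat = n.toNat + 1 := by omega
    simp only [sumOp, if_pos hn, if_pos (by omega : 0 ≤ n + 1), hsucc, Finset.sum_range_succ,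
      Int.toNat_of_nonneg hn]
  · have hpred : (-n).toNat = (-(n + 1)).toNat + 1 := by omega
    rw [sumOp_of_nonpos f (by omega : n + 1 ≤ 0), sumOp_of_nonpos f hn.le, hpred,
      Finset.sum_range_succ']
    simp only [Nat.cast_add, Nat.cast_one, Nat.cast_zero, add_zero, add_assoc, add_comm (1 : ℤ)]
    abel

lemma eq_sumOp {S : ℤ → X} (h0 : S 0 = 0) (hS : ∀ n, S (n + 1) = S n + f n) : S = sumOp f := by
  funext n
  induction n with
  | zero => rw [h0]; simp [sumOp]
  | succ n ih => rw [hS, sumOp_add_one, ih]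
  | pred n ih =>
    have hS' := hS (-n - 1)
    have hsum := sumOp_add_one f (-n - 1)
    rw [sub_add_cancel] at hS' hsum
    rw [ih, hsum] at hS'
    exact add_right_cancel hS'.symm

lemma sumOp_add (a b : ℤ) : sumOp f (a + b) = sumOp f a + sumOp (fun s => f (a + s)) b := by
  have h := eq_sumOp (fun s => f (a + s)) (S := fun b => sumOp f (a + b) - sumOp f a)
    (by simp) fun n => by simp only [← add_assoc, sumOp_add_one]; abel
  rw [← congrFun h b, add_sub_cancel]

end AddCommGroup

variable [NormedAddCommGroup X]

lemma norm_sumOp_sub_le_of_le (f : ℤ → X) {a b : ℤ} (hab : a ≤ b) {K : ℝ}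
    (hK : ∀ x ∈ Icc a b, ‖f x‖ ≤ K) : ‖sumOp f b - sumOp f a‖ ≤ K * (b - a) := by
  induction b, hab using Int.leInduction with
  | base => simp
  | succ b hab ih =>
    have hK' : ∀ x ∈ Icc a b, ‖f x‖ ≤ K := fun x hx => hK x ⟨hx.1, hx.2.trans (by omega)⟩
    calc ‖sumOp f (b + 1) - sumOp f a‖ = ‖(sumOp f b - sumOp f a) + f b‖ := by
          rw [sumOp_add_one]; abel_nf
      _ ≤ K * (b - a) + K :=
          (norm_add_le _ _).trans (add_le_add (ih hK') (hK b ⟨hab, by omega⟩))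
      _ = K * ((b + 1 : ℤ) - a) := by push_cast; ring

variable [NormedSpace ℝ X]

lemma sumOp_shiftAvg (F : Finset ℤ) (f : ℤ → X) (t : ℤ) :
    sumOp (shiftAvg F f) t = (F.card : ℝ)⁻¹ • ∑ u ∈ F, sumOp (fun s => f (u + s)) t := by
  refine (congrFun (eq_sumOp (shiftAvg F f)
    (S := fun n => (F.card : ℝ)⁻¹ • ∑ u ∈ F, sumOp (fun s => f (u + s)) n) ?_ fun n => ?_) t).symm
  · simp [sumOp]
  · simp only [shiftAvg, sumOp_add_one, Finset.sum_add_distrib, smul_add]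

lemma isPrimitiveOn_sumOp (J : Set ℤ) :
    IsPrimitiveOn (X := X) sumOp J fun _ => True where
  apply_zero _ := by simp [sumOp]
  norm_sub_le {f} _ {a b} _ _ K hK := by
    rw [Int.norm_eq_abs, Int.cast_sub]
    rcases le_total a b with hab | hab
    · rw [abs_of_nonneg (by simpa using hab)]
      exact norm_sumOp_sub_le_of_le f hab fun x hx => hK x (Icc_subset_uIcc hx)
    · rw [norm_sub_rev, abs_of_nonpos (by simpa using hab), neg_sub]
      exact norm_sumOp_sub_le_of_le f hab fun x hx => hK x (Icc_subset_uIcc' hx)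
  avg_sub {f} _ {F} _ {t} _ := by simp only [sumOp_add, add_sub_cancel_left, sumOp_shiftAvg]
  prop_shiftAvg {_} _ {_} _ := trivial
  prop_apply _ := trivial

end Sum

section Integral

open MeasureTheory

variable {X : Type*} [NormedAddCommGroup X] [NormedSpace ℝ X] {J : Set ℝ}
  [hJ : J.OrdConnected] {f : ℝ → X}

lemma intOp_sub_intOp (hf : ContinuousOn f J) (h0 : (0 : ℝ) ∈ J) {a b : ℝ} (ha : a ∈ J)
    (hb : b ∈ J) : intOp f b - intOp f a = ∫ x in a..b, f x :=
  intervalIntegral.integral_interval_sub_left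
    (hf.mono (hJ.uIcc_subset h0 hb)).intervalIntegrable
    (hf.mono (hJ.uIcc_subset h0 ha)).intervalIntegrable

lemma norm_intOp_sub_le (hf : ContinuousOn f J) (h0 : (0 : ℝ) ∈ J) {a b : ℝ} (ha : a ∈ J)
    (hb : b ∈ J) {K : ℝ} (hK : ∀ x ∈ uIcc a b, ‖f x‖ ≤ K) :
    ‖intOp f b - intOp f a‖ ≤ K * ‖b - a‖ := by
  rw [intOp_sub_intOp hf h0 ha hb, Real.norm_eq_abs]
  exact intervalIntegral.norm_integral_le_of_norm_le_const fun x hx => hK x (uIoc_subset_uIcc hx)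

lemma continuousOn_intOp (hf : ContinuousOn f J) (h0 : (0 : ℝ) ∈ J) :
    ContinuousOn (intOp f) J := by
  intro x hx
  obtain ⟨δ, hδ, hfδ⟩ := Metric.continuousWithinAt_iff.1 (hf x hx) 1 one_pos
  have hU : (J ∩ Metric.ball x δ).OrdConnected := by
    rw [Real.ball_eq_Ioo]
    exact hJ.inter ordConnected_Ioo
  have hlip : LipschitzOnWith (‖f x‖ + 1).toNNReal (intOp f) (J ∩ Metric.ball x δ) :=
    LipschitzOnWith.of_dist_le' fun a ha b hb => by
      rw [dist_eq_norm, dist_eq_norm]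
      refine norm_intOp_sub_le hf h0 hb.1 ha.1 fun y hy => ?_
      have hy' := hU.uIcc_subset hb ha hy
      have := hfδ hy'.1 hy'.2
      rw [dist_eq_norm] at this
      linarith [norm_le_norm_add_norm_sub' (f y) (f x)]
  exact (hlip.continuousOn x ⟨hx, Metric.mem_ball_self hδ⟩).mono_of_mem_nhdsWithin
    (inter_mem_nhdsWithin J (Metric.ball_mem_nhds x hδ))

lemma intOp_shiftAvg (hJadd : ∀ a ∈ J, ∀ b ∈ J, a + b ∈ J) (hf : ContinuousOn f J)
    (h0 : (0 : ℝ) ∈ J) {F : Finset ℝ} (hFJ : ↑F ⊆ J) {t : ℝ} (ht : t ∈ J) :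
    (F.card : ℝ)⁻¹ • ∑ u ∈ F, (intOp f (u + t) - intOp f u) = intOp (shiftAvg F f) t := by
  have hshift : ∀ u ∈ F, intOp f (u + t) - intOp f u = ∫ s in (0)..t, f (u + s) :=
    fun u hu => by
    rw [intOp_sub_intOp hf h0 (hFJ hu) (hJadd _ (hFJ hu) _ ht),
      intervalIntegral.integral_comp_add_left, add_zero]
  have hint : ∀ u ∈ F, IntervalIntegrable (fun s => f (u + s)) volume 0 t := fun u hu =>
    (hf.comp (continuous_const_add u).continuousOn fun _ hs =>
      hJadd _ (hFJ hu) _ (hJ.uIcc_subset h0 ht hs)).intervalIntegrable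
  rw [Finset.sum_congr rfl hshift, ← intervalIntegral.integral_finsetSum hint,
    ← intervalIntegral.integral_smul]
  rfl

lemma isPrimitiveOn_intOp (hJadd : ∀ a ∈ J, ∀ b ∈ J, a + b ∈ J) (h0 : (0 : ℝ) ∈ J) :
    IsPrimitiveOn (X := X) intOp J (ContinuousOn · J) where
  apply_zero _ := intervalIntegral.integral_same
  norm_sub_le hf _ _ ha hb _ hK := norm_intOp_sub_le hf h0 ha hb hK
  avg_sub hf _ hFJ _ ht := intOp_shiftAvg hJadd hf h0 hFJ ht
  prop_shiftAvg hf _ hFJ := continuousOn_shiftAvg hJadd hf hFJ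
  prop_apply hf := continuousOn_intOp hf h0

end Integral

theorem iterated_primitive_sum_decay_general
    {X : Type*} [NormedAddCommGroup X] [NormedSpace ℂ X]
    (m : ℕ) (hm : 1 ≤ m) :
    (∀ w : ℝ → ℝ, IsStdWeight w →
      ∀ k : ℝ, 0 < k → (∀ s t : ℝ, 0 ≤ s → s ≤ t → w s ≤ k * w t) →
      ∀ J : Set ℝ, (J = Set.univ ∨ J = Set.Ici (0 : ℝ)) →
      ∀ φ : ℝ → X, ContinuousOn φ J → (∃ C : ℝ, ∀ t ∈ J, ‖φ t‖ ≤ C * w t) →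
      MaakOn J (fun t => (w t)⁻¹ • φ t) (0 : X) →
      ∀ ε > 0, ∃ R : ℝ, ∀ t ∈ J, R ≤ |t| →
        ‖(intOp)^[m] φ t‖ ≤ ε * (w t * (1 + |t|) ^ m)) ∧
    (∀ w : ℤ → ℝ, IsStdWeight w →
      ∀ k : ℝ, 0 < k → (∀ s t : ℤ, 0 ≤ s → s ≤ t → w s ≤ k * w t) →
      ∀ J : Set ℤ, (J = Set.univ ∨ J = {n : ℤ | 0 ≤ n}) →
      ∀ φ : ℤ → X, (∃ C : ℝ, ∀ t ∈ J, ‖φ t‖ ≤ C * w t) →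
      MaakOn J (fun t => (w t)⁻¹ • φ t) (0 : X) →
      ∀ ε > 0, ∃ R : ℝ, ∀ t ∈ J, R ≤ |(t : ℝ)| →
        ‖(sumOp)^[m] φ t‖ ≤ ε * (w t * (1 + |(t : ℝ)|) ^ m)) := by
  constructor
  · intro w hw k _ hmono J hJ φ hφ hφC hM
    obtain ⟨_, h0, hJadd⟩ := ordConnected_zero_mem_add_mem hJ
    simpa only [IsLittleOAtInftyOn, Real.norm_eq_abs] using
      (isPrimitiveOn_intOp hJadd h0).isLittleOAtInftyOn_iterate_of_isStdWeight h0 hJadd hw hmono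
        hφ hφC hM hm
  · intro w hw k _ hmono J hJ φ hφC hM
    obtain ⟨_, h0, hJadd⟩ := ordConnected_zero_mem_add_mem hJ
    simpa only [IsLittleOAtInftyOn, Int.norm_eq_abs] using
      (isPrimitiveOn_sumOp J).isLittleOAtInftyOn_iterate_of_isStdWeight h0 hJadd hw hmono
        trivial hφC hM hm

/-- Theorem 4.14: if `φ ∈ E_w^0(J,X)` for a standard weight `w` with
`w(s) ≤ k·w(t)` for `0 ≤ s ≤ t`, then `P^mφ ∈ C_{w·w_m,0}(J,X)` (case `J ⊆ ℝ`),
respectively `S^mφ ∈ C_{w·w_m,0}(J,X)` (case `J ⊆ ℤ`), where `w_m(t) = (1+|t|)^m`. -/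
theorem iterated_primitive_sum_decay
    {X : Type*} [NormedAddCommGroup X] [NormedSpace ℂ X] [CompleteSpace X]
    (m : ℕ) (hm : 1 ≤ m) :
    (∀ w : ℝ → ℝ, IsStdWeight w →
      ∀ k : ℝ, 0 < k → (∀ s t : ℝ, 0 ≤ s → s ≤ t → w s ≤ k * w t) →
      ∀ J : Set ℝ, (J = Set.univ ∨ J = Set.Ici (0 : ℝ)) →
      ∀ φ : ℝ → X, ContinuousOn φ J → (∃ C : ℝ, ∀ t ∈ J, ‖φ t‖ ≤ C * w t) →
      MaakOn J (fun t => (w t)⁻¹ • φ t) (0 : X) →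
      ∀ ε > 0, ∃ R : ℝ, ∀ t ∈ J, R ≤ |t| →
        ‖(intOp)^[m] φ t‖ ≤ ε * (w t * (1 + |t|) ^ m)) ∧
    (∀ w : ℤ → ℝ, IsStdWeight w →
      ∀ k : ℝ, 0 < k → (∀ s t : ℤ, 0 ≤ s → s ≤ t → w s ≤ k * w t) →
      ∀ J : Set ℤ, (J = Set.univ ∨ J = {n : ℤ | 0 ≤ n}) →
      ∀ φ : ℤ → X, (∃ C : ℝ, ∀ t ∈ J, ‖φ t‖ ≤ C * w t) →
      MaakOn J (fun t => (w t)⁻¹ • φ t) (0 : X) →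
      ∀ ε > 0, ∃ R : ℝ, ∀ t ∈ J, R ≤ |(t : ℝ)| →
        ‖(sumOp)^[m] φ t‖ ≤ ε * (w t * (1 + |(t : ℝ)|) ^ m)) :=
  iterated_primitive_sum_decay_general m hm
end

section
/- Let m ≥ 1 and N ≥ 1 be natural numbers and k ≥ 0 an integer, and for 0 ≤ j ≤ N set a(m,j) = (−1)^j · binom(N,j) · binom(m−1+j, j) · j!. Then Σ_{j=0}^N a(m,j)/(j+k)! equals: binom(N+k−m, N) · N!/(N+k)! if m ≤ k; 0 if k+1 ≤ m ≤ k+N; and (−1)^N · binom(m−k−1, N) · N!/(N+k)! if m > k+N. -/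
/-!
Writing `(x)_j` for the rising factorial, `C(m-1+j, j) j! = (m)_j`, so the sum is a terminating
Chu–Vandermonde sum: `∑_j (-1)^j C(N,j) (x)_j / (j+k)! = (k+1-x)_N / (N+k)!` for every `x`.
Pascal's rule on `C(N+1, j)` together with `(x)_{j+1} = x (x+1)_j` gives
`S(N+1, x, k) = S(N, x, k) - x S(N, x+1, k+1)`, and the right-hand side satisfies the same recursion
since `k+1-x` is unchanged by the shift. The three cases are the three shapes of `(k+1-m)_N`:
a product of positive integers, one containing `0`, or one of negative integers.
-/

open Finset Nat Polynomial

theorem ascPochhammer_succ_eval_left {R : Type*} [CommSemiring R] (n : ℕ) (x : R) :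
    (ascPochhammer R (n + 1)).eval x = x * (ascPochhammer R n).eval (x + 1) := by
  simp [ascPochhammer_succ_left]

theorem ascPochhammer_eval_natCast_add_one {R : Type*} [Semiring R] (s n : ℕ) :
    (ascPochhammer R n).eval ((s : R) + 1) = (s + n).choose n * n ! := by
  rw [← Nat.cast_succ, ascPochhammer_nat_eq_natCast_ascFactorial,
    Nat.ascFactorial_eq_factorial_mul_choose, Nat.cast_mul, Nat.cast_comm]

theorem ascPochhammer_eval_neg_natCast {R : Type*} [CommRing R] (t n : ℕ) :
    (ascPochhammer R n).eval (-(t : R)) = (-1) ^ n * (t.choose n * n !) := by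
  rw [ascPochhammer_eval_neg_eq_descPochhammer, descPochhammer_eval_eq_descFactorial,
    Nat.descFactorial_eq_factorial_mul_choose, Nat.cast_mul, mul_comm (n ! : R)]

theorem choose_mul_factorial_eq_ascPochhammer_eval {R : Type*} [Semiring R] {m : ℕ} (hm : 1 ≤ m)
    (j : ℕ) : ((m - 1 + j).choose j * j ! : R) = (ascPochhammer R j).eval (m : R) := by
  rw [ascPochhammer_nat_eq_natCast_ascFactorial, Nat.ascFactorial_eq_factorial_mul_choose',
    Nat.cast_mul, Nat.cast_comm, show m + j - 1 = m - 1 + j by omega]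

theorem sum_neg_one_pow_mul_choose_mul_ascPochhammer_div_factorial {K : Type*} [Field K]
    [CharZero K] (N : ℕ) (x : K) (k : ℕ) :
    ∑ j ∈ range (N + 1), (-1) ^ j * N.choose j * (ascPochhammer K j).eval x / (j + k)! =
      (ascPochhammer K N).eval (k + 1 - x) / (N + k)! := by
  induction N generalizing x k with
  | zero => simp
  | succ N ih =>
    set g : ℕ → K := fun j ↦ (-1) ^ j * N.choose j * (ascPochhammer K j).eval x / (j + k)!
    have hpascal (j : ℕ) : (-1) ^ (j + 1) * ((N + 1).choose (j + 1) : K) *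
          (ascPochhammer K (j + 1)).eval x / (j + 1 + k)! =
        g (j + 1) - x * ((-1) ^ j * N.choose j * (ascPochhammer K j).eval (x + 1) /
          (j + (k + 1))!) := by
      simp only [g, Nat.choose_succ_succ', Nat.cast_add, ascPochhammer_succ_eval_left,
        show j + (k + 1) = j + 1 + k by omega]
      ring
    have hshift : ∑ j ∈ range (N + 1), g (j + 1) + g 0 = ∑ j ∈ range (N + 1), g j := by
      rw [← sum_range_succ' g, sum_range_succ]
      simp [g]
    have hrec : ∑ j ∈ range (N + 2), (-1) ^ j * ((N + 1).choose j : K) *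
          (ascPochhammer K j).eval x / (j + k)! =
        ∑ j ∈ range (N + 1), g j - x * ∑ j ∈ range (N + 1), (-1) ^ j * (N.choose j : K) *
          (ascPochhammer K j).eval (x + 1) / (j + (k + 1))! := by
      rw [sum_range_succ', sum_congr rfl fun j _ ↦ hpascal j, sum_sub_distrib, ← mul_sum,
        ← hshift]
      simp only [g, Nat.choose_zero_right]
      ring
    rw [hrec, ih, ih, ascPochhammer_succ_eval,
      show ((k + 1 : ℕ) : K) + 1 - (x + 1) = k + 1 - x by push_cast; ring,
      show N + (k + 1) = N + k + 1 by omega, show N + 1 + k = N + k + 1 by omega,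
      Nat.factorial_succ, Nat.cast_mul]
    have hne : ((N + k : ℕ) : K) + 1 ≠ 0 := Nat.cast_add_one_ne_zero _
    push_cast at hne ⊢
    field_simp
    ring

theorem binomial_sum_identity_general (m N : ℕ) (hm : 1 ≤ m) (k : ℕ) :
    ∑ j ∈ Finset.range (N + 1),
        ((-1 : ℚ) ^ j * (N.choose j) * ((m - 1 + j).choose j) * (j.factorial))
          / ((j + k).factorial)
      = if m ≤ k then ((N + k - m).choose N : ℚ) * N.factorial / (N + k).factorial
        else if m ≤ k + N then 0
        else (-1 : ℚ) ^ N * ((m - k - 1).choose N : ℚ) * N.factorial / (N + k).factorial := by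
  have hterm (j : ℕ) : (-1 : ℚ) ^ j * N.choose j * (m - 1 + j).choose j * j ! / (j + k)! =
      (-1) ^ j * N.choose j * (ascPochhammer ℚ j).eval (m : ℚ) / (j + k)! := by
    rw [mul_assoc _ _ (j ! : ℚ), choose_mul_factorial_eq_ascPochhammer_eval hm]
  rw [sum_congr rfl fun j _ ↦ hterm j,
    sum_neg_one_pow_mul_choose_mul_ascPochhammer_div_factorial]
  split_ifs with hk hkN
  · rw [show (k : ℚ) + 1 - m = ((k - m : ℕ) : ℚ) + 1 by push_cast [Nat.cast_sub hk]; ring,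
      ascPochhammer_eval_natCast_add_one, show k - m + N = N + k - m by omega]
  all_goals
    rw [show (k : ℚ) + 1 - m = -((m - k - 1 : ℕ) : ℚ) by
        rw [Nat.sub_sub, Nat.cast_sub (by omega)]; push_cast; ring,
      ascPochhammer_eval_neg_natCast]
  · rw [Nat.choose_eq_zero_of_lt (by omega)]
    simp
  · ring

/-- Lemma 7.6(c): with `a(m,j) = (-1)^j C(N,j) C(m-1+j,j) j!`, the sum
`Σ_{j=0}^N a(m,j)/(j+k)!` equals `C(N+k-m,N) N!/(N+k)!` if `m ≤ k`, `0` if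
`k+1 ≤ m ≤ k+N`, and `(-1)^N C(m-k-1,N) N!/(N+k)!` if `m > k+N`. -/
theorem binomial_sum_identity (m N : ℕ) (hm : 1 ≤ m) (hN : 1 ≤ N) (k : ℕ) :
    ∑ j ∈ Finset.range (N + 1),
        ((-1 : ℚ) ^ j * (N.choose j) * ((m - 1 + j).choose j) * (j.factorial))
          / ((j + k).factorial)
      = if m ≤ k then ((N + k - m).choose N : ℚ) * N.factorial / (N + k).factorial
        else if m ≤ k + N then 0
        else (-1 : ℚ) ^ N * ((m - k - 1).choose N : ℚ) * N.factorial / (N + k).factorial :=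
  binomial_sum_identity_general m N hm k
end
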